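/- arXiv:1911.11055 — 10 statements merged into one kernel-verified Lean document; each statement's English description precedes it below -/
import Mathlib

section
/- Let H be an n×n Hermitian matrix with an eigenvalue λ of multiplicity m. Then there exists a subset X of the index set with |X| = m such that λ is not an eigenvalue of the principal submatrix of H obtained by deleting the rows and columns indexed by X (i.e., a star set for λ exists). -/
/-!
Let `K = ker (H - λ)`, of dimension `m`. The coordinate functionals restricted to `K` span its
dual, so `m` of them, indexed by some `X`, form a basis: a vector of `K` is determined by its
coordinates in `X`, and these can be prescribed arbitrarily. If `v` were a `λ`-eigenvector of the
principal submatrix on the complement of `X`, extend it by zero to `w`; then `z = (H - λ) w`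
vanishes off `X`. As an eigenvalue of a Hermitian matrix `λ` is real, so `H - λ` is Hermitian and
`z` is orthogonal to `K`. Taking `u ∈ K` with the same `X`-coordinates as `z` gives
`‖z‖² = ⟪u, z⟫ = 0`, hence `w ∈ K` vanishes on `X`, so `w = 0`, a contradiction.
-/

open Matrix Module

theorem Module.Dual.span_range_eq_top_iff {𝕜 V κ : Type*} [Field 𝕜] [AddCommGroup V] [Module 𝕜 V]
    [FiniteDimensional 𝕜 V] (g : κ → Dual 𝕜 V) :
    Submodule.span 𝕜 (Set.range g) = ⊤ ↔ ∀ v, (∀ k, g k v = 0) → v = 0 := by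
  have hco : ∀ v, v ∈ (Submodule.span 𝕜 (Set.range g)).dualCoannihilator ↔ ∀ k, g k v = 0 := by
    intro v
    rw [← SetLike.mem_coe, Submodule.coe_dualCoannihilator_span]
    simp
  constructor
  · intro h v hv
    have := (hco v).mpr hv
    rwa [h, Submodule.dualCoannihilator_top, Submodule.mem_bot] at this
  · intro h
    rw [← Subspace.dualCoannihilator_dualAnnihilator_eq (W := Submodule.span 𝕜 (Set.range g)),
      (Submodule.eq_bot_iff _).mpr fun v hv => h v ((hco v).mp hv), Submodule.dualAnnihilator_bot]

section
variable {ι 𝕜 : Type*} [Fintype ι] [Field 𝕜]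

theorem Submodule.exists_finset_card_eq_finrank_restrict_bijective (K : Submodule 𝕜 (ι → 𝕜)) :
    ∃ X : Finset ι, X.card = finrank 𝕜 K ∧
      Function.Bijective (LinearMap.funLeft 𝕜 𝕜 ((↑) : X → ι) ∘ₗ K.subtype) := by
  classical
  set f : ι → Dual 𝕜 K := fun i => LinearMap.proj i ∘ₗ K.subtype
  have hspan : Submodule.span 𝕜 (Set.range f) = ⊤ :=
    (Dual.span_range_eq_top_iff f).mpr fun u hu => Subtype.ext (funext hu)
  obtain ⟨κ, a, ha, hspan_a, hli⟩ := exists_linearIndependent' 𝕜 f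
  rw [hspan] at hspan_a
  have := hli.finite
  have := Fintype.ofFinite κ
  set X := Finset.univ.image a
  have hcard : X.card = finrank 𝕜 K := by
    rw [Finset.card_image_of_injective _ ha, Finset.card_univ, ← Subspace.dual_finrank_eq,
      finrank_eq_card_basis (Basis.mk hli hspan_a.ge)]
  have hinj : Function.Injective (LinearMap.funLeft 𝕜 𝕜 ((↑) : X → ι) ∘ₗ K.subtype) := by
    rw [← LinearMap.ker_eq_bot, Submodule.eq_bot_iff]
    intro u hu
    refine (Dual.span_range_eq_top_iff (f ∘ a)).mp hspan_a u fun k => ?_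
    exact congrFun hu ⟨a k, Finset.mem_image_of_mem a (Finset.mem_univ k)⟩
  have hdim : finrank 𝕜 K = finrank 𝕜 (X → 𝕜) := by
    rw [finrank_fintype_fun_eq_card, Fintype.card_coe, hcard]
  exact ⟨X, hcard, hinj, (LinearMap.injective_iff_surjective_of_finrank_eq_finrank hdim).mp hinj⟩

theorem Matrix.mulVec_dite_zero {R : Type*} [NonUnitalNonAssocSemiring R] {p : ι → Prop}
    [DecidablePred p] (A : Matrix ι ι R) (v : Subtype p → R) :
    A *ᵥ (fun i => if h : p i then v ⟨i, h⟩ else 0) = A.submatrix id Subtype.val *ᵥ v := by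
  ext i
  simp only [mulVec, dotProduct, submatrix_apply, id, mul_dite, mul_zero]
  rw [Finset.sum_dite, Finset.sum_const_zero, add_zero]
  exact Finset.sum_bij (fun j _ => ⟨j.1, (Finset.mem_filter.mp j.2).2⟩)
    (by simp) (by simp) (by simp) (by simp)

theorem Matrix.eigenspace_toLin'_eq_ker [DecidableEq ι] (A : Matrix ι ι 𝕜) (μ : 𝕜) :
    End.eigenspace (toLin' A) μ = LinearMap.ker (toLin' (A - μ • 1)) := by
  rw [End.eigenspace_def, map_sub, map_smul, toLin'_one, End.one_eq_id]

end

section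
variable {ι 𝕜 : Type*} [Fintype ι] [RCLike 𝕜]

theorem Matrix.IsHermitian.star_eq_of_hasEigenvalue [DecidableEq ι] {A : Matrix ι ι 𝕜}
    (hA : A.IsHermitian) {μ : 𝕜} (hμ : End.HasEigenvalue (toLin' A) μ) : star μ = μ := by
  have hmem := hμ.mem_spectrum
  rw [spectrum_toLin', hA.spectrum_eq_image_range] at hmem
  obtain ⟨r, -, rfl⟩ := hmem
  exact RCLike.conj_ofReal r

open scoped ComplexOrder in
theorem Matrix.IsHermitian.mulVec_eq_zero_of_support_subset {M : Matrix ι ι 𝕜}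
    (hM : M.IsHermitian) {X : Finset ι} (hX : ∀ c : ι → 𝕜, ∃ u, M *ᵥ u = 0 ∧ ∀ i ∈ X, u i = c i)
    {w : ι → 𝕜} (hw : Function.support (M *ᵥ w) ⊆ X) : M *ᵥ w = 0 := by
  set z := M *ᵥ w
  obtain ⟨u, hMu, huz⟩ := hX z
  have horth : star u ⬝ᵥ z = 0 := by
    rw [dotProduct_mulVec, ← hM.eq, ← star_mulVec, hMu, star_zero, zero_dotProduct]
  have hzz : star z ⬝ᵥ z = star u ⬝ᵥ z := by
    refine Finset.sum_congr rfl fun i _ => ?_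
    by_cases hi : i ∈ X
    · simp only [Pi.star_apply, huz i hi]
    · simp only [Function.notMem_support.mp (mt (@hw i) hi), mul_zero]
  exact dotProduct_star_self_eq_zero.mp (hzz.trans horth)

end

/-- For an `n × n` Hermitian matrix `H` with eigenvalue `λ` of multiplicity `m`,
there is a star set: a set `X` of `m` indices such that `λ` is not an eigenvalue of the
principal submatrix of `H` obtained by deleting the rows and columns indexed by `X`. -/
theorem stmt_0 (n m : ℕ) (H : Matrix (Fin n) (Fin n) ℂ) (hH : H.IsHermitian) (lam : ℂ)
    (hmult : Module.finrank ℂ (Module.End.eigenspace (Matrix.toLin' H) lam) = m) :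
    ∃ X : Finset (Fin n), X.card = m ∧
      ¬ Module.End.HasEigenvalue
        (Matrix.toLin' (H.submatrix (fun i : {i : Fin n // i ∉ X} => (i : Fin n))
          (fun i : {i : Fin n // i ∉ X} => (i : Fin n)))) lam := by
  set M := H - lam • 1
  obtain ⟨X, hcard, hinj, hsurj⟩ :=
    (LinearMap.ker (toLin' M)).exists_finset_card_eq_finrank_restrict_bijective
  rw [← eigenspace_toLin'_eq_ker, hmult] at hcard
  refine ⟨X, hcard, fun heig => ?_⟩
  obtain ⟨v, hv, hv0⟩ := heig.exists_hasEigenvector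
  have hM : M.IsHermitian := by
    rw [IsHermitian, conjTranspose_sub, hH.eq, conjTranspose_smul, conjTranspose_one,
      (hH.submatrix _).star_eq_of_hasEigenvalue heig]
  let ι : {i // i ∉ X} → Fin n := Subtype.val
  have hMv : M.submatrix ι ι *ᵥ v = 0 := by
    have hsub : M.submatrix ι ι = H.submatrix ι ι - lam • 1 := by
      rw [← submatrix_one ι Subtype.val_injective]
      rfl
    rwa [hsub, ← toLin'_apply, ← LinearMap.mem_ker, ← eigenspace_toLin'_eq_ker]
  set w : Fin n → ℂ := fun i => if h : i ∉ X then v ⟨i, h⟩ else 0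
  have hMw : M *ᵥ w = 0 := by
    refine hM.mulVec_eq_zero_of_support_subset (X := X) (fun c => ?_)
      (Function.support_subset_iff'.mpr fun i hi => ?_)
    · obtain ⟨u, hu⟩ := hsurj fun i : X => c i
      exact ⟨u, u.2, fun i hi => congrFun hu ⟨i, hi⟩⟩
    · rw [mulVec_dite_zero]
      exact congrFun hMv ⟨i, hi⟩
  have hw : w = 0 := by
    have := @hinj ⟨w, hMw⟩ 0 (funext fun i => dif_neg (not_not.mpr i.2))
    exact congrArg Subtype.val this
  exact hv0 (funext fun j => by simpa [w, j.2] using congrFun hw j)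
end

section
/- Let H be an n×n Hermitian matrix written in block form H = [[H_X, B*],[B, C]], where H_X is the principal submatrix on an index set X of size m. If X is a star set for an eigenvalue λ (that is, λ has multiplicity m in H and λ is not an eigenvalue of C), then λI − H_X = B*(λI − C)^{−1}B. -/
open Matrix

/-- If `X` (of size `m`) is a star set for the eigenvalue `λ` of the Hermitian matrix
`H = [[H_X, B*],[B, C]]` (i.e. `λ` has multiplicity `m` in `H` and `λ` is not an eigenvalue
of `C`), then `λI − H_X = B*(λI − C)⁻¹B`. -/
theorem stmt_1 (m k : ℕ)
    (HX : Matrix (Fin m) (Fin m) ℂ) (B : Matrix (Fin k) (Fin m) ℂ)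
    (C : Matrix (Fin k) (Fin k) ℂ) (lam : ℂ)
    (hHerm : (Matrix.fromBlocks HX Bᴴ B C).IsHermitian)
    (hmult : Module.finrank ℂ
      (Module.End.eigenspace (Matrix.toLin' (Matrix.fromBlocks HX Bᴴ B C)) lam) = m)
    (hC : ¬ Module.End.HasEigenvalue (Matrix.toLin' C) lam) :
    lam • (1 : Matrix (Fin m) (Fin m) ℂ) - HX = Bᴴ * (lam • 1 - C)⁻¹ * B := by
  classical
  set A : Matrix (Fin k) (Fin k) ℂ := lam • 1 - C with hA
  have hmv : ∀ v : Fin k → ℂ, A *ᵥ v = lam • v - C *ᵥ v := by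
    intro v
    simp [hA, Matrix.sub_mulVec, Matrix.smul_mulVec]
  -- λ not an eigenvalue of C means A *ᵥ v = 0 → v = 0
  have hCv : ∀ v : Fin k → ℂ, C *ᵥ v = lam • v → v = 0 := by
    intro v hv
    by_contra h
    exact hC (Module.End.hasEigenvalue_of_hasEigenvector
      ⟨Module.End.mem_eigenspace_iff.2 (by simpa [Matrix.toLin'_apply] using hv), h⟩)
  have hAinj : Function.Injective (A.mulVec) := by
    have : ∀ v, A *ᵥ v = 0 → v = 0 := by
      intro v hv
      rw [hmv v] at hv
      exact hCv v (sub_eq_zero.mp hv).symm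
    intro x y hxy
    have h0 : A *ᵥ (x - y) = 0 := by rw [Matrix.mulVec_sub, hxy, sub_self]
    exact sub_eq_zero.mp (this (x - y) h0)
  have hAunit : IsUnit A := Matrix.mulVec_injective_iff_isUnit.mp hAinj
  have hAdet : IsUnit A.det := (Matrix.isUnit_iff_isUnit_det A).mp hAunit
  -- the eigenspace
  set M := Matrix.fromBlocks HX Bᴴ B C with hM
  set E := Module.End.eigenspace (Matrix.toLin' M) lam with hE
  -- projection to the first block of coordinates
  set π : E →ₗ[ℂ] (Fin m → ℂ) :=
    (LinearMap.funLeft ℂ ℂ Sum.inl).comp E.subtype with hπ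
  have hdecomp : ∀ x : (Fin m ⊕ Fin k) → ℂ,
      x = Sum.elim (x ∘ Sum.inl) (x ∘ Sum.inr) := by
    intro x; funext i; cases i <;> rfl
  have hmem : ∀ (u : Fin m → ℂ) (v : Fin k → ℂ),
      Sum.elim u v ∈ E ↔
        (HX *ᵥ u + Bᴴ *ᵥ v = lam • u ∧ B *ᵥ u + C *ᵥ v = lam • v) := by
    intro u v
    rw [hE, Module.End.mem_eigenspace_iff, Matrix.toLin'_apply, hM,
      Matrix.fromBlocks_mulVec]
    constructor
    · intro h
      constructor
      · funext i; simpa using congrFun h (Sum.inl i)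
      · funext i; simpa using congrFun h (Sum.inr i)
    · rintro ⟨h1, h2⟩
      funext i
      cases i with
      | inl i => simpa using congrFun h1 i
      | inr i => simpa using congrFun h2 i
  -- π is injective
  have hπinj : Function.Injective π := by
    rw [← LinearMap.ker_eq_bot, Submodule.eq_bot_iff]
    rintro ⟨x, hx⟩ hx0
    have hu : x ∘ Sum.inl = 0 := hx0
    have hx' : Sum.elim (x ∘ Sum.inl) (x ∘ Sum.inr) ∈ E := by
      rwa [← hdecomp x]
    rw [hu] at hx'
    obtain ⟨h1, h2⟩ := (hmem 0 (x ∘ Sum.inr)).mp hx'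
    have hv : x ∘ Sum.inr = 0 := by
      apply hCv
      simpa using h2
    have : x = 0 := by
      rw [hdecomp x, hu, hv]; funext i; cases i <;> rfl
    exact Subtype.ext this
  -- π is surjective by dimension count
  have hπsurj : Function.Surjective π := by
    rw [← LinearMap.range_eq_top]
    apply Submodule.eq_top_of_finrank_eq
    rw [LinearMap.finrank_range_of_inj hπinj]
    rw [hmult, Module.finrank_fintype_fun_eq_card, Fintype.card_fin]
  -- conclude the matrix identity
  apply Matrix.toLin'.injective
  apply LinearMap.ext
  intro u
  obtain ⟨⟨x, hx⟩, hxu⟩ := hπsurj u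
  have hu : x ∘ Sum.inl = u := hxu
  set v : Fin k → ℂ := x ∘ Sum.inr with hv
  have hx' : Sum.elim u v ∈ E := by
    have hx'' := hx
    rw [hdecomp x, hu] at hx''
    exact hx''
  obtain ⟨h1, h2⟩ := (hmem u v).mp hx'
  have hAv : A *ᵥ v = B *ᵥ u := by
    rw [hmv v, sub_eq_iff_eq_add, ← h2]
  have hvA : v = A⁻¹ *ᵥ (B *ᵥ u) := by
    rw [← hAv, Matrix.mulVec_mulVec, Matrix.nonsing_inv_mul A hAdet, Matrix.one_mulVec]
  calc Matrix.toLin' (lam • (1 : Matrix (Fin m) (Fin m) ℂ) - HX) u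
      = lam • u - HX *ᵥ u := by
        simp [Matrix.toLin'_apply, Matrix.sub_mulVec, Matrix.smul_mulVec]
    _ = Bᴴ *ᵥ v := by rw [← h1]; abel
    _ = Matrix.toLin' (Bᴴ * A⁻¹ * B) u := by
        rw [hvA, Matrix.toLin'_apply, ← Matrix.mulVec_mulVec, ← Matrix.mulVec_mulVec]
end

section
/- With the block decomposition H = [[H_X, B*],[B, C]] and X a star set for the eigenvalue λ of H, the λ-eigenspace of H equals the set of vectors of the form (x, (λI − C)^{−1}Bx) as x ranges over ℂ^m. -/
open Matrix

/-- If `X` (of size `m`) is a star set for the eigenvalue `λ` of the Hermitian matrix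
`H = [[H_X, B*],[B, C]]`, then the `λ`-eigenspace of `H` consists exactly of the vectors
`(x, (λI − C)⁻¹ B x)` for `x ∈ ℂ^m`. -/
theorem stmt_2 (m k : ℕ)
    (HX : Matrix (Fin m) (Fin m) ℂ) (B : Matrix (Fin k) (Fin m) ℂ)
    (C : Matrix (Fin k) (Fin k) ℂ) (lam : ℂ)
    (hHerm : (Matrix.fromBlocks HX Bᴴ B C).IsHermitian)
    (hmult : Module.finrank ℂ
      (Module.End.eigenspace (Matrix.toLin' (Matrix.fromBlocks HX Bᴴ B C)) lam) = m)
    (hC : ¬ Module.End.HasEigenvalue (Matrix.toLin' C) lam) :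
    ∀ v : (Fin m ⊕ Fin k) → ℂ,
      v ∈ Module.End.eigenspace (Matrix.toLin' (Matrix.fromBlocks HX Bᴴ B C)) lam ↔
      ∃ x : Fin m → ℂ,
        v = Sum.elim x (((lam • (1 : Matrix (Fin k) (Fin k) ℂ) - C)⁻¹).mulVec (B.mulVec x)) := by
  set A : Matrix (Fin k) (Fin k) ℂ := lam • (1 : Matrix (Fin k) (Fin k) ℂ) - C with hA
  -- `A` has trivial kernel since `lam` is not an eigenvalue of `C`
  have hker : ∀ y : Fin k → ℂ, A.mulVec y = 0 → y = 0 := by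
    intro y hy
    by_contra hy0
    apply hC
    refine Module.End.hasEigenvalue_of_hasEigenvector (x := y) ⟨?_, hy0⟩
    rw [Module.End.mem_eigenspace_iff, Matrix.toLin'_apply]
    have h1 : lam • y - C.mulVec y = 0 := by
      simpa [hA, Matrix.sub_mulVec, Matrix.smul_mulVec, Matrix.one_mulVec] using hy
    have := sub_eq_zero.mp h1
    exact this.symm
  have hinj : Function.Injective A.mulVec := by
    intro a b hab
    have : A.mulVec (a - b) = 0 := by rw [Matrix.mulVec_sub, hab, sub_self]
    exact sub_eq_zero.mp (hker _ this)
  have hdet : IsUnit A.det := (Matrix.isUnit_iff_isUnit_det A).mp (Matrix.mulVec_injective_iff_isUnit.mp hinj)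
  have hAinv : A⁻¹ * A = 1 := Matrix.nonsing_inv_mul A hdet
  -- the candidate subspace as a range of a linear map
  let L : (Fin m → ℂ) →ₗ[ℂ] ((Fin m ⊕ Fin k) → ℂ) :=
    { toFun := fun x => Sum.elim x (A⁻¹.mulVec (B.mulVec x))
      map_add' := by
        intro x y
        funext i
        cases i <;> simp [Matrix.mulVec_add]
      map_smul' := by
        intro c x
        funext i
        cases i <;> simp [Matrix.mulVec_smul] }
  have hLinj : Function.Injective L := by
    intro a b hab
    funext i
    exact congrFun hab (Sum.inl i)
  -- the eigenspace is contained in the range of `L`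
  have hle : Module.End.eigenspace (Matrix.toLin' (Matrix.fromBlocks HX Bᴴ B C)) lam ≤
      LinearMap.range L := by
    intro v hv
    rw [Module.End.mem_eigenspace_iff, Matrix.toLin'_apply] at hv
    set x : Fin m → ℂ := v ∘ Sum.inl with hx
    set y : Fin k → ℂ := v ∘ Sum.inr with hy
    have hv' : v = Sum.elim x y := by funext i; cases i <;> rfl
    rw [hv'] at hv
    rw [Matrix.fromBlocks_mulVec] at hv
    have hbot : B.mulVec x + C.mulVec y = lam • y := by
      have := congrFun hv
      funext j
      simpa using congrFun hv (Sum.inr j)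
    have hAy : A.mulVec y = B.mulVec x := by
      rw [hA, Matrix.sub_mulVec, Matrix.smul_mulVec, Matrix.one_mulVec]
      rw [← hbot]; abel
    have hy' : y = A⁻¹.mulVec (B.mulVec x) := by
      rw [← hAy, Matrix.mulVec_mulVec, hAinv, Matrix.one_mulVec]
    refine ⟨x, ?_⟩
    show Sum.elim x (A⁻¹.mulVec (B.mulVec x)) = v
    rw [hv', ← hy']
  -- dimension count: both sides have dimension `m`
  have hrank : Module.finrank ℂ (LinearMap.range L) = m := by
    rw [LinearMap.finrank_range_of_inj hLinj]
    simp
  have heq : Module.End.eigenspace (Matrix.toLin' (Matrix.fromBlocks HX Bᴴ B C)) lam =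
      LinearMap.range L :=
    Submodule.eq_of_le_of_finrank_le hle (by rw [hrank, hmult])
  intro v
  rw [heq]
  constructor
  · rintro ⟨x, rfl⟩
    exact ⟨x, rfl⟩
  · rintro ⟨x, rfl⟩
    exact ⟨x, rfl⟩
end

section
/- Let M = (m_{ij}) be an n×n complex matrix of rank r, and let f(z, w) = Σ_{(k,ℓ)∈S} a_{k,ℓ} z^k w^ℓ be a polynomial over ℂ indexed by a finite set S of pairs of nonnegative integers. Define f[M] to be the matrix with (i,j) entry f(m_{ij}, conj(m_{ij})). Then rank(f[M]) ≤ Σ_{(k,ℓ)∈S} C(r+k−1, k) · C(r+ℓ−1, ℓ). -/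
/-!
Factor `M = P * Q` through `Fin r`, `r = rank M`. Entrywise operations then factor as well:
`(P * Q) ⊙ (P' * Q')` factors through `κ × κ'`, and by the multinomial theorem the entrywise
`k`-th power of `P * Q` factors through the multisets `Sym (Fin r) k`, of which there are
`C(r + k - 1, k)`; entrywise conjugation factors through `Fin r` again. Rank is subadditive, so
summing over the monomials of `f` gives the bound.
-/

open Matrix

namespace Matrix

variable {m n κ κ' R : Type*} [Fintype κ] [Fintype κ'] [CommSemiring R]

def rowKronecker (P : Matrix m κ R) (P' : Matrix m κ' R) : Matrix m (κ × κ') R :=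
  of fun i st => P i st.1 * P' i st.2

def colKronecker (Q : Matrix κ n R) (Q' : Matrix κ' n R) : Matrix (κ × κ') n R :=
  of fun st j => Q st.1 j * Q' st.2 j

lemma mul_hadamard_mul (P : Matrix m κ R) (Q : Matrix κ n R) (P' : Matrix m κ' R)
    (Q' : Matrix κ' n R) :
    (P * Q) ⊙ (P' * Q') = rowKronecker P P' * colKronecker Q Q' := by
  ext i j
  simp only [hadamard_apply, mul_apply, rowKronecker, colKronecker, of_apply, Finset.sum_mul_sum,
    Fintype.sum_prod_type]
  refine Finset.sum_congr rfl fun _ _ => Finset.sum_congr rfl fun _ _ => ?_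
  ring

noncomputable def rowSymPow [DecidableEq κ] (P : Matrix m κ R) (k : ℕ) :
    Matrix m (Sym κ k) R :=
  of fun i s => s.1.countPerms * (s.1.map (P i)).prod

def colSymPow (Q : Matrix κ n R) (k : ℕ) : Matrix (Sym κ k) n R :=
  of fun s j => (s.1.map (Q · j)).prod

lemma map_pow_mul [DecidableEq κ] (P : Matrix m κ R) (Q : Matrix κ n R) (k : ℕ) :
    (P * Q).map (· ^ k) = rowSymPow P k * colSymPow Q k := by
  ext i j
  simp only [map_apply, mul_apply, rowSymPow, colSymPow, of_apply, Finset.sum_pow,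
    Finset.sym_univ, Multiset.prod_map_mul, mul_assoc]

section Field

variable {K : Type*} [Field K] [Fintype n]

lemma rank_mul_le_card_width (P : Matrix m κ K) (Q : Matrix κ n K) :
    (P * Q).rank ≤ Fintype.card κ :=
  (rank_mul_le_left P Q).trans (rank_le_card_width P)

lemma exists_eq_mul_of_rank (A : Matrix m n K) :
    ∃ (P : Matrix m (Fin A.rank) K) (Q : Matrix (Fin A.rank) n K), A = P * Q := by
  classical
  let b := Module.finBasisOfFinrankEq K (LinearMap.range A.mulVecLin) rfl
  have hcol : ∀ j, Aᵀ j ∈ LinearMap.range A.mulVecLin := fun j =>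
    ⟨Pi.single j 1, by ext i; simp [mulVec_single]⟩
  refine ⟨of fun i t => (b t : m → K) i, of fun t j => b.repr ⟨Aᵀ j, hcol j⟩ t, ?_⟩
  ext i j
  have h := congrArg (fun v : LinearMap.range A.mulVecLin => (v : m → K) i)
    (b.sum_repr ⟨Aᵀ j, hcol j⟩)
  simp only [Submodule.coe_sum, Submodule.coe_smul, Finset.sum_apply, Pi.smul_apply,
    smul_eq_mul, transpose_apply] at h
  rw [mul_apply, ← h]
  exact Finset.sum_congr rfl fun _ _ => mul_comm _ _

lemma rank_add_le (A B : Matrix m n K) : (A + B).rank ≤ A.rank + B.rank := by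
  obtain ⟨P, Q, hA⟩ := exists_eq_mul_of_rank A
  obtain ⟨P', Q', hB⟩ := exists_eq_mul_of_rank B
  calc (A + B).rank = (fromCols P P' * fromRows Q Q').rank := by
        rw [fromCols_mul_fromRows, ← hA, ← hB]
    _ ≤ A.rank + B.rank := by
        simpa using rank_mul_le_card_width (fromCols P P') (fromRows Q Q')

lemma rank_sum_le {ι : Type*} (s : Finset ι) (A : ι → Matrix m n K) :
    (∑ i ∈ s, A i).rank ≤ ∑ i ∈ s, (A i).rank := by
  classical
  induction s using Finset.induction_on with
  | empty => simp [rank_zero]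
  | insert i s hi ih =>
    rw [Finset.sum_insert hi, Finset.sum_insert hi]
    exact (rank_add_le _ _).trans (Nat.add_le_add_left ih _)

lemma rank_smul_le (c : K) (A : Matrix m n K) : (c • A).rank ≤ A.rank := by
  classical
  simpa [smul_eq_mul_diagonal] using rank_mul_le_left A (diagonal fun _ : n => c)

lemma rank_hadamard_le (A B : Matrix m n K) : (A ⊙ B).rank ≤ A.rank * B.rank := by
  obtain ⟨P, Q, hA⟩ := exists_eq_mul_of_rank A
  obtain ⟨P', Q', hB⟩ := exists_eq_mul_of_rank B
  calc (A ⊙ B).rank = (rowKronecker P P' * colKronecker Q Q').rank := by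
        rw [← mul_hadamard_mul, ← hA, ← hB]
    _ ≤ A.rank * B.rank := by
        simpa using rank_mul_le_card_width (rowKronecker P P') (colKronecker Q Q')

lemma rank_map_pow_le (A : Matrix m n K) (k : ℕ) :
    (A.map (· ^ k)).rank ≤ (A.rank + k - 1).choose k := by
  obtain ⟨P, Q, hA⟩ := exists_eq_mul_of_rank A
  calc (A.map (· ^ k)).rank = (rowSymPow P k * colSymPow Q k).rank := by
        rw [← map_pow_mul, ← hA]
    _ ≤ (A.rank + k - 1).choose k := by
        simpa [Sym.card_sym_eq_choose] using
          rank_mul_le_card_width (rowSymPow P k) (colSymPow Q k)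

lemma rank_map_le {L : Type*} [Field L] (f : K →+* L) (A : Matrix m n K) :
    (A.map f).rank ≤ A.rank := by
  obtain ⟨P, Q, hA⟩ := exists_eq_mul_of_rank A
  calc (A.map f).rank = (P.map f * Q.map f).rank := by rw [← Matrix.map_mul, ← hA]
    _ ≤ A.rank := by simpa using rank_mul_le_card_width (P.map f) (Q.map f)

end Field

end Matrix

/-- Entrywise polynomial application and rank: if `M` is an `n × n` complex matrix of rank `r`
and `f(z,w) = Σ_{(k,ℓ)∈S} a_{k,ℓ} z^k w^ℓ`, then the matrix `f[M]` with entries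
`f(m_{ij}, conj m_{ij})` has rank at most `Σ_{(k,ℓ)∈S} C(r+k−1,k)·C(r+ℓ−1,ℓ)`. -/
theorem stmt_6 (n : ℕ) (M : Matrix (Fin n) (Fin n) ℂ) (S : Finset (ℕ × ℕ)) (a : ℕ × ℕ → ℂ) :
    Matrix.rank (Matrix.of fun i j =>
        ∑ p ∈ S, a p * (M i j) ^ p.1 * (starRingEnd ℂ (M i j)) ^ p.2)
      ≤ ∑ p ∈ S, (M.rank + p.1 - 1).choose p.1 * (M.rank + p.2 - 1).choose p.2 := by
  set C := M.map (starRingEnd ℂ)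
  have hf : (of fun i j => ∑ p ∈ S, a p * M i j ^ p.1 * starRingEnd ℂ (M i j) ^ p.2) =
      ∑ p ∈ S, a p • (M.map (· ^ p.1) ⊙ C.map (· ^ p.2)) := by
    ext i j
    simp only [of_apply, Matrix.sum_apply, Matrix.smul_apply, hadamard_apply, map_apply, C,
      smul_eq_mul, mul_assoc]
  have hC : C.rank ≤ M.rank := rank_map_le _ M
  rw [hf]
  refine (rank_sum_le _ _).trans (Finset.sum_le_sum fun p _ => ?_)
  calc (a p • (M.map (· ^ p.1) ⊙ C.map (· ^ p.2))).rank
      ≤ (M.map (· ^ p.1)).rank * (C.map (· ^ p.2)).rank :=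
        (rank_smul_le _ _).trans (rank_hadamard_le _ _)
    _ ≤ (M.rank + p.1 - 1).choose p.1 * (M.rank + p.2 - 1).choose p.2 :=
        Nat.mul_le_mul (rank_map_pow_le M p.1)
          ((rank_map_pow_le C p.2).trans (Nat.choose_le_choose _ (by omega)))
end

section
/- Let X be a finite subset of the unit circle {z ∈ ℂ : |z| = 1} such that the set A(X) of products conj(x)·y over distinct x, y ∈ X is contained in {a, b, x₀ + iy₀, x₀ − iy₀} for some real numbers a, b, x₀, y₀ with a ≠ b and y₀ ≠ 0. Then |X| ≤ 4. -/
/-!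
Fix `x ∈ X`. Left multiplication by `conj x` is injective on `X \ {x}`, so when `|X| ≥ 5` it maps
these at least four points onto the at most four admissible values; in particular `a` and `b` are
both attained. A real number of the form `conj x · y` with `|x| = |y| = 1` is `±1`, and `1` would
force `y = x`. Hence `a = b = -1`.
-/

open ComplexConjugate

lemma Finset.exists_mul_eq_of_card_lt {M : Type*} [MonoidWithZero M] [IsLeftCancelMulZero M]
    [DecidableEq M]
    {X T : Finset M} {c x : M} (hc : c ≠ 0) (hmaps : ∀ y ∈ X, y ≠ x → c * y ∈ T)
    (hcard : T.card < X.card) : ∀ t ∈ T, ∃ y ∈ X, y ≠ x ∧ c * y = t := by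
  intro t ht
  have hmaps' : Set.MapsTo (c * ·) (X.erase x : Set M) T := fun y hy ↦
    hmaps y (Finset.mem_of_mem_erase hy) (Finset.ne_of_mem_erase hy)
  have hinj : Set.InjOn (c * ·) (X.erase x : Set M) := fun _ _ _ _ h ↦ mul_left_cancel₀ hc h
  have hle : T.card ≤ (X.erase x).card := by
    have := Finset.pred_card_le_card_erase (s := X) (a := x)
    omega
  obtain ⟨y, hy, rfl⟩ := Finset.surjOn_of_injOn_of_card_le _ hmaps' hinj hle ht
  exact ⟨y, Finset.mem_of_mem_erase hy, Finset.ne_of_mem_erase hy, rfl⟩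

lemma Complex.eq_neg_one_of_conj_mul_eq_ofReal {x y : ℂ} {r : ℝ} (hx : ‖x‖ = 1) (hy : ‖y‖ = 1)
    (hxy : x ≠ y) (h : conj x * y = r) : r = -1 := by
  have habs : |r| = 1 := by
    rw [← Real.norm_eq_abs, ← Complex.norm_real, ← h, norm_mul, Complex.norm_conj, hx, hy, one_mul]
  rcases abs_eq zero_le_one |>.mp habs with rfl | rfl
  · have hx0 : conj x ≠ 0 := by rw [map_ne_zero, ← norm_ne_zero_iff, hx]; exact one_ne_zero
    refine absurd (mul_left_cancel₀ hx0 ?_) hxy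
    rw [h, Complex.conj_mul', hx]
    norm_num
  · rfl

theorem stmt_7_general (X : Finset ℂ) (hX : ∀ z ∈ X, ‖z‖ = 1)
    (a b x₀ y₀ : ℝ) (hab : a ≠ b)
    (hA : ∀ x ∈ X, ∀ y ∈ X, x ≠ y →
      (starRingEnd ℂ x) * y ∈
        ({(a : ℂ), (b : ℂ), (x₀ : ℂ) + (y₀ : ℂ) * Complex.I,
          (x₀ : ℂ) - (y₀ : ℂ) * Complex.I} : Set ℂ)) :
    X.card ≤ 4 := by
  by_contra! hcard
  obtain ⟨x, hx⟩ : X.Nonempty := Finset.card_pos.mp (by omega)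
  set T : Finset ℂ := {(a : ℂ), (b : ℂ), (x₀ : ℂ) + (y₀ : ℂ) * Complex.I,
    (x₀ : ℂ) - (y₀ : ℂ) * Complex.I}
  have hx0 : conj x ≠ 0 := by rw [map_ne_zero, ← norm_ne_zero_iff, hX x hx]; exact one_ne_zero
  have hmaps : ∀ y ∈ X, y ≠ x → conj x * y ∈ T := fun y hy hyx ↦ by
    simpa [T] using hA x hx y hy (Ne.symm hyx)
  have hsurj := Finset.exists_mul_eq_of_card_lt hx0 hmaps (Finset.card_le_four.trans_lt hcard)
  have hreal : ∀ r : ℝ, (r : ℂ) ∈ T → r = -1 := fun r hr ↦ by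
    obtain ⟨y, hy, hyx, hyr⟩ := hsurj r hr
    exact Complex.eq_neg_one_of_conj_mul_eq_ofReal (hX x hx) (hX y hy) (Ne.symm hyx) hyr
  exact hab ((hreal a (by simp [T])).trans (hreal b (by simp [T])).symm)

/-- If `X` is a finite set on the complex unit circle whose pairwise Hermitian products
`conj(x)·y` (for distinct `x,y`) lie in `{a, b, x₀+iy₀, x₀−iy₀}` with `a ≠ b` real and
`y₀ ≠ 0` real, then `|X| ≤ 4`. -/
theorem stmt_7 (X : Finset ℂ) (hX : ∀ z ∈ X, ‖z‖ = 1)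
    (a b x₀ y₀ : ℝ) (hab : a ≠ b) (hy : y₀ ≠ 0)
    (hA : ∀ x ∈ X, ∀ y ∈ X, x ≠ y →
      (starRingEnd ℂ x) * y ∈
        ({(a : ℂ), (b : ℂ), (x₀ : ℂ) + (y₀ : ℂ) * Complex.I,
          (x₀ : ℂ) - (y₀ : ℂ) * Complex.I} : Set ℂ)) :
    X.card ≤ 4 :=
  stmt_7_general X hX a b x₀ y₀ hab hA
end

section
/- Let X be a finite subset of the unit circle in ℂ with |X| = 4 such that A(X) = {conj(x)·y : x ≠ y in X} is contained in {a, b, x₀+iy₀, x₀−iy₀} with a ≠ b real and y₀ ≠ 0 real. Then there exists a unimodular constant c such that cX = {1, −1, i, −i}. -/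
/-!
Rotate `X` so that it contains `1`. Then every other point `y` is itself a product `conj 1 * y`,
so it is `w := x₀ + i y₀`, `conj w`, or a real number of modulus one other than `1`, i.e. `-1`;
having four points, the rotated set is exactly `{1, -1, w, conj w}`. The product
`conj w * (-1) = -conj w` is not real and is neither `conj w` nor (unless `re w = 0`) `w`,
which forces `w = ±i`.
-/

open ComplexConjugate

namespace Complex

/-- The set `A(X)` of Hermitian products of distinct points of `X`. -/
def hermitianProducts (X : Finset ℂ) : Set ℂ :=
  {z | ∃ x ∈ X, ∃ y ∈ X, x ≠ y ∧ conj x * y = z}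

lemma conj_mul_self_of_norm_eq_one {z : ℂ} (hz : ‖z‖ = 1) : conj z * z = 1 := by
  rw [conj_mul', hz]; norm_num

lemma ofReal_eq_one_or_eq_neg_one {r : ℝ} (hr : ‖(r : ℂ)‖ = 1) :
    (r : ℂ) = 1 ∨ (r : ℂ) = -1 := by
  rw [norm_real, Real.norm_eq_abs] at hr
  rcases abs_eq zero_le_one |>.mp hr with rfl | rfl <;> simp

lemma conj_mul_conj_mul_of_norm_eq_one {c : ℂ} (hc : ‖c‖ = 1) (x y : ℂ) :
    conj (c * x) * (c * y) = conj x * y := by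
  rw [map_mul, mul_mul_mul_comm, conj_mul_self_of_norm_eq_one hc, one_mul]

lemma hermitianProducts_image_mul {c : ℂ} (hc : ‖c‖ = 1) (X : Finset ℂ) :
    hermitianProducts (X.image (c * ·)) = hermitianProducts X := by
  have hinj : Function.Injective (c * ·) :=
    mul_right_injective₀ (by rintro rfl; simp at hc)
  ext z
  simp only [hermitianProducts, Finset.mem_image, Set.mem_ofPred_eq]
  constructor
  · rintro ⟨_, ⟨x, hx, rfl⟩, _, ⟨y, hy, rfl⟩, hxy, rfl⟩
    exact ⟨x, hx, y, hy, fun h => hxy (h ▸ rfl),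
      (conj_mul_conj_mul_of_norm_eq_one hc x y).symm⟩
  · rintro ⟨x, hx, y, hy, hxy, rfl⟩
    exact ⟨c * x, ⟨x, hx, rfl⟩, c * y, ⟨y, hy, rfl⟩, hinj.ne hxy,
      conj_mul_conj_mul_of_norm_eq_one hc x y⟩

section NormalizedSet

variable {Y : Finset ℂ} {a b : ℝ} {w : ℂ}

lemma subset_one_neg_one_of_one_mem (hY : ∀ z ∈ Y, ‖z‖ = 1) (h1 : 1 ∈ Y)
    (hA : hermitianProducts Y ⊆ {(a : ℂ), (b : ℂ), w, conj w}) :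
    Y ⊆ {1, -1, w, conj w} := by
  intro y hy
  by_cases hy1 : y = 1
  · simp [hy1]
  have hmem : conj 1 * y ∈ ({(a : ℂ), (b : ℂ), w, conj w} : Set ℂ) :=
    hA ⟨1, h1, y, hy, Ne.symm hy1, rfl⟩
  rw [map_one, one_mul] at hmem
  have hreal : ∀ r : ℝ, y = r → y = -1 := by
    rintro r rfl
    exact (ofReal_eq_one_or_eq_neg_one (hY _ hy)).resolve_left hy1
  rcases hmem with hr | hr | rfl | rfl
  · simp [hreal a hr]
  · simp [hreal b hr]
  all_goals simp

lemma re_eq_zero_of_neg_conj_mem (hw : w.im ≠ 0)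
    (h : -conj w ∈ ({(a : ℂ), (b : ℂ), w, conj w} : Set ℂ)) : w.re = 0 := by
  rcases h with h | h | h | h
  · exact absurd (by simpa using congrArg im h) hw
  · exact absurd (by simpa using congrArg im h) hw
  · have := congrArg re h
    simp only [neg_re, conj_re] at this
    linarith
  · have := congrArg im h
    simp only [neg_im, conj_im, neg_neg] at this
    exact absurd (by linarith) hw

lemma eq_I_or_eq_neg_I_of_re_eq_zero (hw : ‖w‖ = 1) (hre : w.re = 0) :
    w = I ∨ w = -I := by
  have him : w.im ^ 2 = 1 := by
    have h : normSq w = 1 := by rw [normSq_eq_norm_sq, hw, one_pow]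
    rw [normSq_apply, hre] at h
    linarith
  rcases sq_eq_one_iff.mp him with h | h
  · left; exact ext hre h
  · right; exact ext (by simp [hre]) (by simp [h])

theorem eq_one_neg_one_I_neg_I_of_one_mem (hY : ∀ z ∈ Y, ‖z‖ = 1) (h1 : 1 ∈ Y)
    (hcard : Y.card = 4) (hw : w.im ≠ 0)
    (hA : hermitianProducts Y ⊆ {(a : ℂ), (b : ℂ), w, conj w}) :
    Y = {1, -1, I, -I} := by
  have hYT : Y = {1, -1, w, conj w} :=
    Finset.eq_of_subset_of_card_le (subset_one_neg_one_of_one_mem hY h1 hA)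
      (hcard ▸ Finset.card_le_four)
  have hm1 : -1 ∈ Y := by simp [hYT]
  have hwY : w ∈ Y := by simp [hYT]
  have hwm1 : w ≠ -1 := fun h => hw (by simp [h])
  have hprod : conj w * (-1) ∈ ({(a : ℂ), (b : ℂ), w, conj w} : Set ℂ) :=
    hA ⟨w, hwY, -1, hm1, hwm1, rfl⟩
  rw [mul_neg_one] at hprod
  rcases eq_I_or_eq_neg_I_of_re_eq_zero (hY w hwY) (re_eq_zero_of_neg_conj_mem hw hprod)
    with rfl | rfl
  · simpa using hYT
  · simpa [Finset.pair_comm] using hYT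

end NormalizedSet

end Complex

theorem stmt_8_general (X : Finset ℂ) (hX : ∀ z ∈ X, ‖z‖ = 1)
    (a b x₀ y₀ : ℝ) (hy : y₀ ≠ 0)
    (hA : ∀ x ∈ X, ∀ y ∈ X, x ≠ y →
      (starRingEnd ℂ x) * y ∈
        ({(a : ℂ), (b : ℂ), (x₀ : ℂ) + (y₀ : ℂ) * Complex.I,
          (x₀ : ℂ) - (y₀ : ℂ) * Complex.I} : Set ℂ))
    (hcard : X.card = 4) :
    ∃ c : ℂ, ‖c‖ = 1 ∧
      X.image (fun x => c * x) = ({1, -1, Complex.I, -Complex.I} : Finset ℂ) := by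
  obtain ⟨x₁, hx₁⟩ := Finset.card_pos.mp (by omega : 0 < X.card)
  have hc : ‖conj x₁‖ = 1 := by rw [Complex.norm_conj, hX x₁ hx₁]
  have hnorm : ∀ z ∈ X.image (conj x₁ * ·), ‖z‖ = 1 := by
    simp only [Finset.mem_image]
    rintro _ ⟨x, hx, rfl⟩
    rw [norm_mul, hc, hX x hx, one_mul]
  have hone : 1 ∈ X.image (conj x₁ * ·) :=
    Finset.mem_image.mpr ⟨x₁, hx₁, Complex.conj_mul_self_of_norm_eq_one (hX x₁ hx₁)⟩
  have hcard' : (X.image (conj x₁ * ·)).card = 4 := by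
    rw [Finset.card_image_of_injective _ (mul_right_injective₀ (by rintro h; simp [h] at hc)),
      hcard]
  have hconj : conj ((x₀ : ℂ) + y₀ * Complex.I) = x₀ - y₀ * Complex.I := by
    simp only [map_add, map_mul, Complex.conj_ofReal, Complex.conj_I]; ring
  have hprods : Complex.hermitianProducts (X.image (conj x₁ * ·)) ⊆
      {(a : ℂ), (b : ℂ), x₀ + y₀ * Complex.I, conj ((x₀ : ℂ) + y₀ * Complex.I)} := by
    rw [Complex.hermitianProducts_image_mul hc, hconj]
    rintro _ ⟨x, hx, y, hy, hxy, rfl⟩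
    exact hA x hx y hy hxy
  exact ⟨conj x₁, hc,
    Complex.eq_one_neg_one_I_neg_I_of_one_mem hnorm hone hcard' (by simpa using hy) hprods⟩

/-- If `X` is a 4-element set on the complex unit circle whose pairwise Hermitian products
`conj(x)·y` (for distinct `x,y`) lie in `{a, b, x₀+iy₀, x₀−iy₀}` with `a ≠ b` real and
`y₀ ≠ 0` real, then some rotation of `X` equals `{1, −1, i, −i}`. -/
theorem stmt_8 (X : Finset ℂ) (hX : ∀ z ∈ X, ‖z‖ = 1)
    (a b x₀ y₀ : ℝ) (hab : a ≠ b) (hy : y₀ ≠ 0)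
    (hA : ∀ x ∈ X, ∀ y ∈ X, x ≠ y →
      (starRingEnd ℂ x) * y ∈
        ({(a : ℂ), (b : ℂ), (x₀ : ℂ) + (y₀ : ℂ) * Complex.I,
          (x₀ : ℂ) - (y₀ : ℂ) * Complex.I} : Set ℂ))
    (hcard : X.card = 4) :
    ∃ c : ℂ, ‖c‖ = 1 ∧
      X.image (fun x => c * x) = ({1, -1, Complex.I, -Complex.I} : Finset ℂ) :=
  stmt_8_general X hX a b x₀ y₀ hy hA hcard
end

section
/- For the indefinite Hermitian form B of signature (p,q) on ℂ^d (d = p+q) with β(z) = B(z,z), the space Hom(d,k,ℓ) decomposes as the direct sum of Harm_B(d,k,ℓ) := Hom(d,k,ℓ) ∩ ker ∂_β and β·Hom(d,k−1,ℓ−1), where ∂_β = Σ_{i=1}^p ∂²/(∂z_i∂conj(z_i)) − Σ_{i=p+1}^d ∂²/(∂z_i∂conj(z_i)); consequently dim Harm_B(d,k,ℓ) = dim Hom(d,k,ℓ) − dim Hom(d,k−1,ℓ−1). -/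
set_option maxHeartbeats 1000000
set_option synthInstance.maxHeartbeats 400000


open MvPolynomial

/-- Bi-homogeneous polynomials of bidegree `(k,ℓ)` in `z` (variables `Sum.inl i`) and
`conj z` (variables `Sum.inr i`). -/
noncomputable def HomSpace (d k ℓ : ℕ) : Submodule ℂ (MvPolynomial (Fin d ⊕ Fin d) ℂ) :=
  Submodule.span ℂ {f | ∃ m : (Fin d ⊕ Fin d) →₀ ℕ,
    (∑ i, m (Sum.inl i)) = k ∧ (∑ i, m (Sum.inr i)) = ℓ ∧ f = monomial m 1}

/-- `β(z) = Σ_{i≤p} z_i conj(z_i) − Σ_{i>p} z_i conj(z_i)` for the signature-`(p,q)` form. -/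
noncomputable def betaPoly (d p : ℕ) : MvPolynomial (Fin d ⊕ Fin d) ℂ :=
  ∑ i : Fin d, (if (i : ℕ) < p then (1 : ℂ) else -1) • (X (Sum.inl i) * X (Sum.inr i))

/-- The indefinite Laplace operator
`∂_β = Σ_{i≤p} ∂²/(∂z_i∂conj z_i) − Σ_{i>p} ∂²/(∂z_i∂conj z_i)`. -/
noncomputable def LapB (d p : ℕ) : Module.End ℂ (MvPolynomial (Fin d ⊕ Fin d) ℂ) :=
  ∑ i : Fin d, (if (i : ℕ) < p then (1 : ℂ) else -1) •
    ((pderiv (Sum.inl i)).toLinearMap ∘ₗ (pderiv (Sum.inr i)).toLinearMap)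

/-- `Harm_B(d,k,ℓ) = Hom(d,k,ℓ) ∩ ker ∂_β`. -/
noncomputable def HarmB (d p k ℓ : ℕ) : Submodule ℂ (MvPolynomial (Fin d ⊕ Fin d) ℂ) :=
  HomSpace d k ℓ ⊓ LinearMap.ker (LapB d p)

namespace Stmt11Aux

open Finsupp LinearMap

noncomputable def eps (p : ℕ) {d : ℕ} (i : Fin d) : ℂ := if (i : ℕ) < p then 1 else -1

lemma eps_smul_eps_smul {d p : ℕ} (i : Fin d) (x : MvPolynomial (Fin d ⊕ Fin d) ℂ) :
    eps p i • eps p i • x = x := by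
  rw [smul_smul]
  unfold eps
  split_ifs <;> norm_num

lemma eps_ne_zero {d p : ℕ} (i : Fin d) : eps p i ≠ 0 := by
  unfold eps; split_ifs <;> norm_num

lemma betaPoly_eq (d p : ℕ) :
    betaPoly d p = ∑ i : Fin d, eps p i • (X (Sum.inl i) * X (Sum.inr i)) := rfl

lemma lapB_apply {d p : ℕ} (f : MvPolynomial (Fin d ⊕ Fin d) ℂ) :
    LapB d p f = ∑ i : Fin d, eps p i • (pderiv (Sum.inl i) (pderiv (Sum.inr i) f)) := by
  rw [LapB, LinearMap.sum_apply]
  exact Finset.sum_congr rfl fun i _ => rfl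

lemma monomial_mem_homSpace {d k ℓ : ℕ} {m : (Fin d ⊕ Fin d) →₀ ℕ}
    (h1 : (∑ i, m (Sum.inl i)) = k) (h2 : (∑ i, m (Sum.inr i)) = ℓ) :
    (monomial m 1 : MvPolynomial (Fin d ⊕ Fin d) ℂ) ∈ HomSpace d k ℓ :=
  Submodule.subset_span ⟨m, h1, h2, rfl⟩

lemma homSpace_le {d k ℓ : ℕ} {N : Submodule ℂ (MvPolynomial (Fin d ⊕ Fin d) ℂ)}
    (h : ∀ m : (Fin d ⊕ Fin d) →₀ ℕ, (∑ i, m (Sum.inl i)) = k → (∑ i, m (Sum.inr i)) = ℓ →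
      (monomial m 1 : MvPolynomial (Fin d ⊕ Fin d) ℂ) ∈ N) : HomSpace d k ℓ ≤ N := by
  rw [HomSpace, Submodule.span_le]
  rintro f ⟨m, h1, h2, rfl⟩
  exact h m h1 h2

lemma mul_X_inl_mem {d k ℓ : ℕ} (i0 : Fin d) {f : MvPolynomial (Fin d ⊕ Fin d) ℂ}
    (hf : f ∈ HomSpace d k ℓ) : X (Sum.inl i0) * f ∈ HomSpace d (k + 1) ℓ := by
  revert f
  suffices h : HomSpace d k ℓ ≤
      Submodule.comap (LinearMap.mulLeft ℂ (X (Sum.inl i0))) (HomSpace d (k + 1) ℓ) by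
    intro f hf; exact h hf
  apply homSpace_le
  intro m h1 h2
  simp only [Submodule.mem_comap, LinearMap.mulLeft_apply]
  have hX : (X (Sum.inl i0) : MvPolynomial (Fin d ⊕ Fin d) ℂ) * monomial m 1
      = monomial (Finsupp.single (Sum.inl i0) 1 + m) 1 := by
    rw [X, monomial_mul, one_mul]
  rw [hX]
  apply monomial_mem_homSpace
  · have : ∀ i : Fin d, ((Finsupp.single (Sum.inl i0) 1 + m : (Fin d ⊕ Fin d) →₀ ℕ)) (Sum.inl i)
        = (if i0 = i then 1 else 0) + m (Sum.inl i) := by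
      intro i; simp [Finsupp.single_apply]
    rw [Finset.sum_congr rfl fun i _ => this i, Finset.sum_add_distrib, Finset.sum_ite_eq, h1]
    simp [add_comm]
  · have : ∀ i : Fin d, ((Finsupp.single (Sum.inl i0) 1 + m : (Fin d ⊕ Fin d) →₀ ℕ)) (Sum.inr i) = m (Sum.inr i) := by
      intro i; simp [Finsupp.single_apply]
    rw [Finset.sum_congr rfl fun i _ => this i, h2]

lemma mul_X_inr_mem {d k ℓ : ℕ} (i0 : Fin d) {f : MvPolynomial (Fin d ⊕ Fin d) ℂ}
    (hf : f ∈ HomSpace d k ℓ) : X (Sum.inr i0) * f ∈ HomSpace d k (ℓ + 1) := by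
  revert f
  suffices h : HomSpace d k ℓ ≤
      Submodule.comap (LinearMap.mulLeft ℂ (X (Sum.inr i0))) (HomSpace d k (ℓ + 1)) by
    intro f hf; exact h hf
  apply homSpace_le
  intro m h1 h2
  simp only [Submodule.mem_comap, LinearMap.mulLeft_apply]
  have hX : (X (Sum.inr i0) : MvPolynomial (Fin d ⊕ Fin d) ℂ) * monomial m 1
      = monomial (Finsupp.single (Sum.inr i0) 1 + m) 1 := by
    rw [X, monomial_mul, one_mul]
  rw [hX]
  apply monomial_mem_homSpace
  · have : ∀ i : Fin d, ((Finsupp.single (Sum.inr i0) 1 + m : (Fin d ⊕ Fin d) →₀ ℕ)) (Sum.inl i) = m (Sum.inl i) := by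
      intro i; simp [Finsupp.single_apply]
    rw [Finset.sum_congr rfl fun i _ => this i, h1]
  · have : ∀ i : Fin d, ((Finsupp.single (Sum.inr i0) 1 + m : (Fin d ⊕ Fin d) →₀ ℕ)) (Sum.inr i)
        = (if i0 = i then 1 else 0) + m (Sum.inr i) := by
      intro i; simp [Finsupp.single_apply]
    rw [Finset.sum_congr rfl fun i _ => this i, Finset.sum_add_distrib, Finset.sum_ite_eq, h2]
    simp [add_comm]

lemma beta_mul_mem {d p k ℓ : ℕ} {f : MvPolynomial (Fin d ⊕ Fin d) ℂ}
    (hf : f ∈ HomSpace d k ℓ) : betaPoly d p * f ∈ HomSpace d (k + 1) (ℓ + 1) := by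
  rw [betaPoly_eq, Finset.sum_mul]
  apply Submodule.sum_mem
  intro i _
  rw [smul_mul_assoc, mul_assoc]
  exact Submodule.smul_mem _ _ (mul_X_inl_mem i (mul_X_inr_mem i hf))

lemma pderiv_inl_mem {d k ℓ : ℕ} (i0 : Fin d) {f : MvPolynomial (Fin d ⊕ Fin d) ℂ}
    (hf : f ∈ HomSpace d k ℓ) : pderiv (Sum.inl i0) f ∈ HomSpace d (k - 1) ℓ := by
  revert f
  suffices h : HomSpace d k ℓ ≤
      Submodule.comap (pderiv (Sum.inl i0)).toLinearMap (HomSpace d (k - 1) ℓ) by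
    intro f hf; exact h hf
  apply homSpace_le
  intro m h1 h2
  simp only [Submodule.mem_comap, Derivation.coeFn_coe, pderiv_monomial, one_mul]
  by_cases h0 : m (Sum.inl i0) = 0
  · simp [h0]
  · have hmono : (monomial (m - Finsupp.single (Sum.inl i0) 1) ((m (Sum.inl i0) : ℂ))
        : MvPolynomial (Fin d ⊕ Fin d) ℂ)
        = (m (Sum.inl i0) : ℂ) • monomial (m - Finsupp.single (Sum.inl i0) 1) 1 := by
      rw [smul_monomial, smul_eq_mul, mul_one]
    rw [hmono]
    apply Submodule.smul_mem
    apply monomial_mem_homSpace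
    · have key : ∀ i : Fin d, m (Sum.inl i)
          = ((m - Finsupp.single (Sum.inl i0) 1 : (Fin d ⊕ Fin d) →₀ ℕ)) (Sum.inl i) + (if i0 = i then 1 else 0) := by
        intro i
        have hs : (Finsupp.single (Sum.inl i0) 1 : (Fin d ⊕ Fin d) →₀ ℕ) (Sum.inl i)
            = if i0 = i then 1 else 0 := by simp [Finsupp.single_apply]
        rw [Finsupp.tsub_apply, hs]
        split_ifs with hi
        · subst hi; omega
        · omega
      have := Finset.sum_congr rfl (fun i (_ : i ∈ Finset.univ) => key i)
      rw [this, Finset.sum_add_distrib, Finset.sum_ite_eq] at h1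
      simp only [Finset.mem_univ, if_pos] at h1
      omega
    · have : ∀ i : Fin d, ((m - Finsupp.single (Sum.inl i0) 1 : (Fin d ⊕ Fin d) →₀ ℕ)) (Sum.inr i) = m (Sum.inr i) := by
        intro i; simp [Finsupp.tsub_apply, Finsupp.single_apply]
      rw [Finset.sum_congr rfl fun i _ => this i, h2]

lemma pderiv_inr_mem {d k ℓ : ℕ} (i0 : Fin d) {f : MvPolynomial (Fin d ⊕ Fin d) ℂ}
    (hf : f ∈ HomSpace d k ℓ) : pderiv (Sum.inr i0) f ∈ HomSpace d k (ℓ - 1) := by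
  revert f
  suffices h : HomSpace d k ℓ ≤
      Submodule.comap (pderiv (Sum.inr i0)).toLinearMap (HomSpace d k (ℓ - 1)) by
    intro f hf; exact h hf
  apply homSpace_le
  intro m h1 h2
  simp only [Submodule.mem_comap, Derivation.coeFn_coe, pderiv_monomial, one_mul]
  by_cases h0 : m (Sum.inr i0) = 0
  · simp [h0]
  · have hmono : (monomial (m - Finsupp.single (Sum.inr i0) 1) ((m (Sum.inr i0) : ℂ))
        : MvPolynomial (Fin d ⊕ Fin d) ℂ)
        = (m (Sum.inr i0) : ℂ) • monomial (m - Finsupp.single (Sum.inr i0) 1) 1 := by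
      rw [smul_monomial, smul_eq_mul, mul_one]
    rw [hmono]
    apply Submodule.smul_mem
    apply monomial_mem_homSpace
    · have : ∀ i : Fin d, ((m - Finsupp.single (Sum.inr i0) 1 : (Fin d ⊕ Fin d) →₀ ℕ)) (Sum.inl i) = m (Sum.inl i) := by
        intro i; simp [Finsupp.tsub_apply, Finsupp.single_apply]
      rw [Finset.sum_congr rfl fun i _ => this i, h1]
    · have key : ∀ i : Fin d, m (Sum.inr i)
          = ((m - Finsupp.single (Sum.inr i0) 1 : (Fin d ⊕ Fin d) →₀ ℕ)) (Sum.inr i) + (if i0 = i then 1 else 0) := by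
        intro i
        have hs : (Finsupp.single (Sum.inr i0) 1 : (Fin d ⊕ Fin d) →₀ ℕ) (Sum.inr i)
            = if i0 = i then 1 else 0 := by simp [Finsupp.single_apply]
        rw [Finsupp.tsub_apply, hs]
        split_ifs with hi
        · subst hi; omega
        · omega
      have := Finset.sum_congr rfl (fun i (_ : i ∈ Finset.univ) => key i)
      rw [this, Finset.sum_add_distrib, Finset.sum_ite_eq] at h2
      simp only [Finset.mem_univ, if_pos] at h2
      omega

lemma lapB_mem {d p k ℓ : ℕ} {f : MvPolynomial (Fin d ⊕ Fin d) ℂ}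
    (hf : f ∈ HomSpace d k ℓ) : LapB d p f ∈ HomSpace d (k - 1) (ℓ - 1) := by
  rw [lapB_apply]
  apply Submodule.sum_mem
  intro i _
  exact Submodule.smul_mem _ _ (pderiv_inl_mem i (pderiv_inr_mem i hf))

lemma pderiv_inl_zero {d b : ℕ} (i0 : Fin d) {f : MvPolynomial (Fin d ⊕ Fin d) ℂ}
    (hf : f ∈ HomSpace d 0 b) : pderiv (Sum.inl i0) f = 0 := by
  revert f
  suffices h : HomSpace d 0 b ≤ LinearMap.ker (pderiv (Sum.inl i0)).toLinearMap by
    intro f hf; exact h hf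
  apply homSpace_le
  intro m h1 h2
  have h0 : m (Sum.inl i0) = 0 :=
    (Finset.sum_eq_zero_iff.mp h1) i0 (Finset.mem_univ _)
  simp [LinearMap.mem_ker, pderiv_monomial, h0]

lemma lapB_zero_of_left {d p b : ℕ} {f : MvPolynomial (Fin d ⊕ Fin d) ℂ}
    (hf : f ∈ HomSpace d 0 b) : LapB d p f = 0 := by
  rw [lapB_apply]
  apply Finset.sum_eq_zero
  intro i _
  rw [pderiv_inl_zero i (pderiv_inr_mem i hf), smul_zero]

lemma X_mul_pderiv_monomial {d : ℕ} (j : Fin d ⊕ Fin d) (m : (Fin d ⊕ Fin d) →₀ ℕ) :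
    X j * pderiv j (monomial m (1 : ℂ)) = ((m j : ℕ) : ℂ) • monomial m 1 := by
  rw [pderiv_monomial, one_mul]
  by_cases h0 : m j = 0
  · simp [h0]
  · have hX : (X j : MvPolynomial (Fin d ⊕ Fin d) ℂ)
          * monomial (m - Finsupp.single j 1) ((m j : ℂ))
        = monomial (Finsupp.single j 1 + (m - Finsupp.single j 1)) ((m j : ℂ)) := by
      rw [X, monomial_mul, one_mul]
    rw [hX]
    have heq : Finsupp.single j 1 + (m - Finsupp.single j 1) = m := by
      ext j'
      have hs : (Finsupp.single j 1 : (Fin d ⊕ Fin d) →₀ ℕ) j' = if j = j' then 1 else 0 :=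
        Finsupp.single_apply
      rw [Finsupp.add_apply, Finsupp.tsub_apply, hs]
      split_ifs with hj
      · subst hj; omega
      · omega
    rw [heq, smul_monomial, smul_eq_mul, mul_one]

noncomputable def eulerOp (d : ℕ) : Module.End ℂ (MvPolynomial (Fin d ⊕ Fin d) ℂ) :=
  ∑ j : Fin d ⊕ Fin d, (LinearMap.mulLeft ℂ (X j)) ∘ₗ (pderiv j).toLinearMap

lemma eulerOp_apply {d : ℕ} (f : MvPolynomial (Fin d ⊕ Fin d) ℂ) :
    eulerOp d f = ∑ j : Fin d ⊕ Fin d, X j * pderiv j f := by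
  rw [eulerOp]
  simp

lemma euler {d k ℓ : ℕ} {f : MvPolynomial (Fin d ⊕ Fin d) ℂ} (hf : f ∈ HomSpace d k ℓ) :
    (∑ j : Fin d ⊕ Fin d, X j * pderiv j f) = ((k + ℓ : ℕ) : ℂ) • f := by
  have h : HomSpace d k ℓ ≤
      LinearMap.ker (eulerOp d - ((k + ℓ : ℕ) : ℂ) • (LinearMap.id : Module.End ℂ _)) := by
    apply homSpace_le
    intro m h1 h2
    rw [LinearMap.mem_ker, LinearMap.sub_apply, LinearMap.smul_apply, LinearMap.id_apply,
      sub_eq_zero, eulerOp_apply]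
    rw [Finset.sum_congr rfl fun j _ => X_mul_pderiv_monomial j m, ← Finset.sum_smul,
      ← Nat.cast_sum]
    congr 2
    rw [Fintype.sum_sum_type, h1, h2]
  have := h hf
  rw [LinearMap.mem_ker, LinearMap.sub_apply, LinearMap.smul_apply, LinearMap.id_apply,
    sub_eq_zero, eulerOp_apply] at this
  exact this

lemma pderiv_betaPoly_inr {d p : ℕ} (i : Fin d) :
    pderiv (Sum.inr i) (betaPoly d p) = eps p i • X (Sum.inl i) := by
  rw [betaPoly_eq, map_sum]
  rw [Finset.sum_eq_single i]
  · rw [Derivation.map_smul, pderiv_mul, pderiv_X_self, pderiv_X_of_ne (by simp)]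
    simp
  · intro j _ hj
    rw [Derivation.map_smul, pderiv_mul, pderiv_X_of_ne (by simp),
      pderiv_X_of_ne (by simpa using hj)]
    simp
  · intro h; exact absurd (Finset.mem_univ i) h

lemma pderiv_betaPoly_inl {d p : ℕ} (i : Fin d) :
    pderiv (Sum.inl i) (betaPoly d p) = eps p i • X (Sum.inr i) := by
  rw [betaPoly_eq, map_sum]
  rw [Finset.sum_eq_single i]
  · rw [Derivation.map_smul, pderiv_mul, pderiv_X_self, pderiv_X_of_ne (by simp)]
    simp
  · intro j _ hj
    rw [Derivation.map_smul, pderiv_mul, pderiv_X_of_ne (by simpa using hj),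
      pderiv_X_of_ne (by simp)]
    simp
  · intro h; exact absurd (Finset.mem_univ i) h

lemma lap_beta_mul {d p : ℕ} (f : MvPolynomial (Fin d ⊕ Fin d) ℂ) :
    LapB d p (betaPoly d p * f) = betaPoly d p * LapB d p f
      + (∑ j : Fin d ⊕ Fin d, X j * pderiv j f) + (d : ℂ) • f := by
  have hterm : ∀ i : Fin d,
      eps p i • pderiv (Sum.inl i) (pderiv (Sum.inr i) (betaPoly d p * f))
        = X (Sum.inl i) * pderiv (Sum.inl i) f + X (Sum.inr i) * pderiv (Sum.inr i) f
          + f + eps p i • (betaPoly d p * pderiv (Sum.inl i) (pderiv (Sum.inr i) f)) := by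
    intro i
    have h1 : pderiv (Sum.inr i) (betaPoly d p * f)
        = eps p i • (X (Sum.inl i) * f) + betaPoly d p * pderiv (Sum.inr i) f := by
      rw [pderiv_mul, pderiv_betaPoly_inr, smul_mul_assoc]
    have h2 : pderiv (Sum.inl i) (X (Sum.inl i) * f)
        = f + X (Sum.inl i) * pderiv (Sum.inl i) f := by
      rw [pderiv_mul, pderiv_X_self, one_mul]
    have h3 : pderiv (Sum.inl i) (betaPoly d p * pderiv (Sum.inr i) f)
        = eps p i • (X (Sum.inr i) * pderiv (Sum.inr i) f)
          + betaPoly d p * pderiv (Sum.inl i) (pderiv (Sum.inr i) f) := by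
      rw [pderiv_mul, pderiv_betaPoly_inl, smul_mul_assoc]
    rw [h1, map_add, Derivation.map_smul, h2, h3]
    have he : eps p i * eps p i = 1 := by unfold eps; split_ifs <;> norm_num
    simp only [smul_add, smul_smul, he, one_smul]
    module
  rw [lapB_apply (betaPoly d p * f), Finset.sum_congr rfl fun i _ => hterm i]
  rw [Finset.sum_add_distrib, Finset.sum_add_distrib, Finset.sum_add_distrib]
  rw [Fintype.sum_sum_type (f := fun j => X j * pderiv j f)]
  rw [lapB_apply f, Finset.mul_sum]
  simp only [mul_smul_comm]
  rw [Finset.sum_const, Finset.card_univ, Fintype.card_fin]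
  push_cast
  module

lemma lap_beta_mul_hom {d p k ℓ : ℕ} {f : MvPolynomial (Fin d ⊕ Fin d) ℂ}
    (hf : f ∈ HomSpace d k ℓ) :
    LapB d p (betaPoly d p * f) = betaPoly d p * LapB d p f + ((k + ℓ + d : ℕ) : ℂ) • f := by
  rw [lap_beta_mul, euler hf]
  push_cast
  module

lemma key_inj {d p : ℕ} : ∀ (a b : ℕ) (g : MvPolynomial (Fin d ⊕ Fin d) ℂ),
    g ∈ HomSpace d a b → ∀ μ : ℝ, μ < 0 →
      betaPoly d p * LapB d p g = (μ : ℂ) • g → g = 0 := by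
  intro a
  induction a with
  | zero =>
    intro b g hg μ hμ heq
    rw [lapB_zero_of_left hg, mul_zero] at heq
    have hμ0 : (μ : ℂ) ≠ 0 := by exact_mod_cast ne_of_lt hμ
    rcases smul_eq_zero.mp heq.symm with h | h
    · exact absurd h hμ0
    · exact h
  | succ a ih =>
    intro b g hg μ hμ heq
    set h := LapB d p g with hh
    have hhm : h ∈ HomSpace d a (b - 1) := by
      have := lapB_mem (p := p) hg
      simpa using this
    have hβh : betaPoly d p * h = (μ : ℂ) • g := heq
    have hLap : LapB d p (betaPoly d p * h)
        = betaPoly d p * LapB d p h + ((a + (b - 1) + d : ℕ) : ℂ) • h :=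
      lap_beta_mul_hom hhm
    have hLap2 : LapB d p (betaPoly d p * h) = (μ : ℂ) • h := by
      rw [hβh, map_smul, hh]
    have hkey : betaPoly d p * LapB d p h = ((μ - (a + (b - 1) + d : ℕ) : ℝ) : ℂ) • h := by
      have hcomb : (μ : ℂ) • h
          = betaPoly d p * LapB d p h + ((a + (b - 1) + d : ℕ) : ℂ) • h := by
        rw [← hLap2, hLap]
      have hsub : betaPoly d p * LapB d p h
          = (μ : ℂ) • h - ((a + (b - 1) + d : ℕ) : ℂ) • h :=
        eq_sub_of_add_eq hcomb.symm
      rw [hsub, ← sub_smul]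
      congr 1
      push_cast
      ring
    have hμ' : μ - (a + (b - 1) + d : ℕ) < 0 := by
      have : (0 : ℝ) ≤ (a + (b - 1) + d : ℕ) := Nat.cast_nonneg _
      linarith
    have hzero : h = 0 := ih (b - 1) h hhm _ hμ' hkey
    rw [hzero, mul_zero] at hβh
    have hμ0 : (μ : ℂ) ≠ 0 := by exact_mod_cast ne_of_lt hμ
    rcases smul_eq_zero.mp hβh.symm with h' | h'
    · exact absurd h' hμ0
    · exact h'

lemma lap_beta_inj {d p a b : ℕ} (hd : 0 < d) {g : MvPolynomial (Fin d ⊕ Fin d) ℂ}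
    (hg : g ∈ HomSpace d a b) (hz : LapB d p (betaPoly d p * g) = 0) : g = 0 := by
  have hLap := lap_beta_mul_hom (p := p) hg
  rw [hz] at hLap
  have hkey : betaPoly d p * LapB d p g = ((-(a + b + d : ℕ) : ℝ) : ℂ) • g := by
    have hsub : betaPoly d p * LapB d p g = -(((a + b + d : ℕ) : ℂ) • g) :=
      eq_neg_of_add_eq_zero_left hLap.symm
    rw [hsub, ← neg_smul]
    congr 1
    push_cast
    ring
  have hneg : (-(a + b + d : ℕ) : ℝ) < 0 := by
    have : (0 : ℝ) < (a + b + d : ℕ) := by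
      have : 0 < a + b + d := by omega
      exact_mod_cast this
    linarith
  exact key_inj a b g hg _ hneg hkey

lemma homSpace_finiteDimensional (d k ℓ : ℕ) : FiniteDimensional ℂ (HomSpace d k ℓ) := by
  apply Submodule.finiteDimensional_of_le
    (S₂ := restrictTotalDegree (Fin d ⊕ Fin d) ℂ (k + ℓ))
  apply homSpace_le
  intro m h1 h2
  rw [mem_restrictTotalDegree]
  rw [totalDegree_monomial _ (one_ne_zero)]
  rw [Finsupp.sum_fintype _ _ (fun _ => rfl)]
  rw [Fintype.sum_sum_type, h1, h2]

lemma betaPoly_ne_zero {d p : ℕ} (hd : 0 < d) : betaPoly d p ≠ 0 := by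
  classical
  intro h
  set i0 : Fin d := ⟨0, hd⟩ with hi0
  have hXX : ∀ i : Fin d, (X (Sum.inl i) * X (Sum.inr i) : MvPolynomial (Fin d ⊕ Fin d) ℂ)
      = monomial (Finsupp.single (Sum.inl i) 1 + Finsupp.single (Sum.inr i) 1) 1 := by
    intro i; rw [X, X, monomial_mul, one_mul]
  have hc : coeff (Finsupp.single (Sum.inl i0) 1 + Finsupp.single (Sum.inr i0) 1)
      (betaPoly d p) = eps p i0 := by
    rw [betaPoly_eq, coeff_sum]
    rw [Finset.sum_eq_single i0]
    · rw [coeff_smul, hXX, coeff_monomial, if_pos rfl]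
      simp
    · intro i _ hi
      rw [coeff_smul, hXX, coeff_monomial, if_neg, smul_zero]
      intro hEq
      have := DFunLike.congr_fun hEq (Sum.inl i)
      simp [Finsupp.single_apply, Ne.symm hi] at this
    · intro hmem; exact absurd (Finset.mem_univ i0) hmem
  rw [h, coeff_zero] at hc
  exact eps_ne_zero i0 hc.symm

lemma harmB_le (d p k ℓ : ℕ) : HarmB d p k ℓ ≤ HomSpace d k ℓ := inf_le_left

lemma harmB_le_ker (d p k ℓ : ℕ) : HarmB d p k ℓ ≤ LinearMap.ker (LapB d p) := inf_le_right

end Stmt11Aux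

/-- `Hom(d,k,ℓ)` is the (internal) direct sum of `Harm_B(d,k,ℓ)` and `β·Hom(d,k−1,ℓ−1)`;
consequently `dim Harm_B(d,k,ℓ) = dim Hom(d,k,ℓ) − dim Hom(d,k−1,ℓ−1)`. -/
theorem stmt_11 (p q k ℓ : ℕ) (hk : 1 ≤ k) (hl : 1 ≤ ℓ) :
    HomSpace (p + q) k ℓ
        = HarmB (p + q) p k ℓ ⊔
          Submodule.map (LinearMap.mulLeft ℂ (betaPoly (p + q) p))
            (HomSpace (p + q) (k - 1) (ℓ - 1)) ∧
    HarmB (p + q) p k ℓ ⊓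
        Submodule.map (LinearMap.mulLeft ℂ (betaPoly (p + q) p))
          (HomSpace (p + q) (k - 1) (ℓ - 1)) = ⊥ ∧
    Module.finrank ℂ (HarmB (p + q) p k ℓ)
        = Module.finrank ℂ (HomSpace (p + q) k ℓ)
          - Module.finrank ℂ (HomSpace (p + q) (k - 1) (ℓ - 1)) := by
  classical
  open Stmt11Aux in
  rcases Nat.eq_zero_or_pos (p + q) with hd0 | hd0
  · -- degenerate case `d = 0`
    have hA : HomSpace (p + q) k ℓ = ⊥ := by
      rw [HomSpace]
      convert Submodule.span_empty (M := MvPolynomial (Fin (p + q) ⊕ Fin (p + q)) ℂ) (R := ℂ)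
      ext f
      simp only [Set.mem_setOf_eq, Set.mem_empty_iff_false, iff_false]
      rintro ⟨m, h1, -, -⟩
      have : (Finset.univ : Finset (Fin (p + q))) = ∅ := by
        apply Finset.univ_eq_empty_iff.mpr
        rw [hd0]; exact Fin.isEmpty'
      rw [this, Finset.sum_empty] at h1
      omega
    have hβ : betaPoly (p + q) p = 0 := by
      rw [betaPoly_eq]
      have : (Finset.univ : Finset (Fin (p + q))) = ∅ := by
        apply Finset.univ_eq_empty_iff.mpr
        rw [hd0]; exact Fin.isEmpty'
      rw [this, Finset.sum_empty]
    have hB : Submodule.map (LinearMap.mulLeft ℂ (betaPoly (p + q) p))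
        (HomSpace (p + q) (k - 1) (ℓ - 1)) = ⊥ := by
      rw [hβ]
      have hz : LinearMap.mulLeft ℂ (0 : MvPolynomial (Fin (p + q) ⊕ Fin (p + q)) ℂ) = 0 := by
        ext x; simp
      rw [hz]
      exact Submodule.map_zero _
    have hH : HarmB (p + q) p k ℓ = ⊥ := by
      rw [HarmB, hA, bot_inf_eq]
    refine ⟨?_, ?_, ?_⟩
    · rw [hA, hH, hB, sup_bot_eq]
    · rw [hH, hB, bot_inf_eq]
    · rw [hH, hA, finrank_bot]
      omega
  · -- main case `d ≥ 1`
    set β : MvPolynomial (Fin (p + q) ⊕ Fin (p + q)) ℂ := betaPoly (p + q) p with hβdef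
    haveI : FiniteDimensional ℂ (HomSpace (p + q) k ℓ) := homSpace_finiteDimensional _ _ _
    haveI : FiniteDimensional ℂ (HomSpace (p + q) (k - 1) (ℓ - 1)) :=
      homSpace_finiteDimensional _ _ _
    have hmap_CA : ∀ x ∈ HomSpace (p + q) (k - 1) (ℓ - 1), β * x ∈ HomSpace (p + q) k ℓ := by
      intro x hx
      have := beta_mul_mem (p := p) hx
      rwa [Nat.sub_add_cancel hk, Nat.sub_add_cancel hl] at this
    have hmap_AC : ∀ x ∈ HomSpace (p + q) k ℓ,
        LapB (p + q) p x ∈ HomSpace (p + q) (k - 1) (ℓ - 1) := fun x hx => lapB_mem hx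
    -- the endomorphism `g ↦ ∂_β (β g)` of `Hom(k-1,ℓ-1)` is injective, hence surjective
    have hmapS : ∀ x ∈ HomSpace (p + q) (k - 1) (ℓ - 1),
        ((LapB (p + q) p) ∘ₗ (LinearMap.mulLeft ℂ β)) x ∈ HomSpace (p + q) (k - 1) (ℓ - 1) := by
      intro x hx
      simp only [LinearMap.comp_apply, LinearMap.mulLeft_apply]
      exact hmap_AC _ (hmap_CA x hx)
    set S := ((LapB (p + q) p) ∘ₗ (LinearMap.mulLeft ℂ β)).restrict hmapS with hSdef
    have hSinj : Function.Injective S := by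
      rw [← LinearMap.ker_eq_bot, Submodule.eq_bot_iff]
      rintro ⟨x, hx⟩ hker
      rw [LinearMap.mem_ker] at hker
      have hx0 : LapB (p + q) p (β * x) = 0 := by
        have h1 := congrArg Subtype.val hker
        simpa [hSdef, LinearMap.restrict_apply] using h1
      exact Subtype.ext (lap_beta_inj hd0 hx hx0)
    have hSsurj := LinearMap.surjective_of_injective hSinj
    -- the restricted Laplace map `L : Hom(k,ℓ) → Hom(k-1,ℓ-1)` is surjective
    set L := (LapB (p + q) p).restrict hmap_AC with hLdef
    have hLsurj : Function.Surjective L := by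
      intro y
      obtain ⟨x, hx⟩ := hSsurj y
      refine ⟨⟨β * x.1, hmap_CA x.1 x.2⟩, ?_⟩
      apply Subtype.ext
      have h1 := congrArg Subtype.val hx
      simpa [hSdef, hLdef, LinearMap.restrict_apply] using h1
    -- rank-nullity
    have hrn := LinearMap.finrank_range_add_finrank_ker L
    have hrange : Module.finrank ℂ (LinearMap.range L)
        = Module.finrank ℂ (HomSpace (p + q) (k - 1) (ℓ - 1)) := by
      rw [LinearMap.range_eq_top.mpr hLsurj, finrank_top]
    have hkerL : LinearMap.ker L
        = Submodule.comap (HomSpace (p + q) k ℓ).subtype (HarmB (p + q) p k ℓ) := by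
      rw [hLdef, LinearMap.ker_restrict, HarmB, Submodule.comap_inf,
        Submodule.comap_subtype_self, top_inf_eq]
    have hker : Module.finrank ℂ (LinearMap.ker L)
        = Module.finrank ℂ (HarmB (p + q) p k ℓ) := by
      rw [hkerL]
      exact (Submodule.comapSubtypeEquivOfLe (harmB_le (p + q) p k ℓ)).finrank_eq
    rw [hrange, hker] at hrn
    -- the multiplication map is injective
    have hβne : β ≠ 0 := betaPoly_ne_zero hd0
    have hinj : Function.Injective (LinearMap.mulLeft ℂ β) := by
      intro x y hxy
      simp only [LinearMap.mulLeft_apply] at hxy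
      exact mul_left_cancel₀ hβne hxy
    have hfrB : Module.finrank ℂ
        (Submodule.map (LinearMap.mulLeft ℂ β) (HomSpace (p + q) (k - 1) (ℓ - 1)))
        = Module.finrank ℂ (HomSpace (p + q) (k - 1) (ℓ - 1)) :=
      ((Submodule.equivMapOfInjective _ hinj (HomSpace (p + q) (k - 1) (ℓ - 1))).finrank_eq).symm
    -- the intersection is trivial
    have hinf : HarmB (p + q) p k ℓ ⊓
        Submodule.map (LinearMap.mulLeft ℂ β) (HomSpace (p + q) (k - 1) (ℓ - 1)) = ⊥ := by
      rw [Submodule.eq_bot_iff]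
      rintro x ⟨hxH, hxB⟩
      obtain ⟨g, hg, rfl⟩ := hxB
      have hLap0 : LapB (p + q) p (β * g) = 0 := by
        have h2 := harmB_le_ker (p + q) p k ℓ hxH
        rw [LinearMap.mem_ker] at h2
        simpa [LinearMap.mulLeft_apply] using h2
      have hg0 : g = 0 := lap_beta_inj hd0 hg hLap0
      simp [hg0]
    -- finishing
    haveI : FiniteDimensional ℂ (HarmB (p + q) p k ℓ) :=
      Submodule.finiteDimensional_of_le (harmB_le (p + q) p k ℓ)
    have hBle : Submodule.map (LinearMap.mulLeft ℂ β) (HomSpace (p + q) (k - 1) (ℓ - 1))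
        ≤ HomSpace (p + q) k ℓ := by
      rintro x ⟨g, hg, rfl⟩
      simpa [LinearMap.mulLeft_apply] using hmap_CA g hg
    haveI : FiniteDimensional ℂ
        (Submodule.map (LinearMap.mulLeft ℂ β) (HomSpace (p + q) (k - 1) (ℓ - 1))) :=
      Submodule.finiteDimensional_of_le hBle
    have hsupfr := Submodule.finrank_sup_add_finrank_inf_eq (HarmB (p + q) p k ℓ)
      (Submodule.map (LinearMap.mulLeft ℂ β) (HomSpace (p + q) (k - 1) (ℓ - 1)))
    rw [hinf, finrank_bot, add_zero, hfrB] at hsupfr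
    have hsup : HarmB (p + q) p k ℓ ⊔
        Submodule.map (LinearMap.mulLeft ℂ β) (HomSpace (p + q) (k - 1) (ℓ - 1))
        = HomSpace (p + q) k ℓ := by
      apply Submodule.eq_of_le_of_finrank_le (sup_le (harmB_le (p + q) p k ℓ) hBle)
      omega
    exact ⟨hsup.symm, hinf, by omega⟩
end

section
/- Let A be the adjacency matrix of a connected k-regular simple graph on n vertices and let λ ∉ {0, −1, k} be an eigenvalue of A of multiplicity n − d with d ≥ 2. If A has no eigenvalue equal to λ(2λ − 2k − λn)/(2λ − 2k + n), then n ≤ d(d−1)/2. -/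
/-!
Put `B = A - λ • 1`. Its column space `W` has dimension `d` and contains the all-ones vector `1`,
since `B 1 = (k - λ) 1`. The linear map `(c, x) ↦ B diag(c) B + x 1ᵀ + 1 xᵀ` on `ℝⁿ × W` takes
values in the span of the symmetrised products `u vᵀ + v uᵀ` with `u, v ∈ W`, of dimension at most
`d (d + 1) / 2`, and it is injective: comparing the diagonal and the row sums of
`B diag(c) B + x 1ᵀ + 1 xᵀ = 0` eliminates `x` and leaves
`(2λ - 2k + n) A c = λ (2λ - 2k - λn) c + 2 (∑ x) 1`. As the quotient of the two coefficients is
not an eigenvalue of `A` (and the right-hand coefficient is nonzero when the left one vanishes),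
`c` is constant; a nonzero constant `c` would make `B²` a multiple of the all-ones matrix, whereas
`rank B² = rank B = d ≥ 2`. Hence `n + d ≤ d (d + 1) / 2`.
-/

open Matrix Module

theorem Submodule.finrank_map₂_le_choose_of_symm {K M N : Type*} [Field K] [AddCommGroup M]
    [Module K M] [AddCommGroup N] [Module K N] (f : M →ₗ[K] M →ₗ[K] N)
    (hf : ∀ u v, f u v = f v u) (W : Submodule K M) [FiniteDimensional K W] :
    finrank K (map₂ f W W) ≤ (finrank K W + 1).choose 2 := by
  set b := Module.finBasis K W
  have hW : W = span K (Set.range (W.subtype ∘ b)) := by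
    rw [Set.range_comp, ← Submodule.map_span, b.span_eq, Submodule.map_subtype_top]
  let g : Sym2 (Fin (finrank K W)) → N := Sym2.lift ⟨fun i l => f (b i) (b l), fun i l => hf _ _⟩
  have hsub : Set.image2 (fun u v => f u v) (Set.range (W.subtype ∘ b))
      (Set.range (W.subtype ∘ b)) ⊆ Set.range g := by
    rintro _ ⟨_, ⟨i, rfl⟩, _, ⟨l, rfl⟩, rfl⟩
    exact ⟨s(i, l), rfl⟩
  have : FiniteDimensional K (span K (Set.range g)) :=
    FiniteDimensional.span_of_finite K (Set.finite_range g)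
  calc finrank K (map₂ f W W)
      = finrank K (span K (Set.image2 (fun u v => f u v) (Set.range (W.subtype ∘ b))
          (Set.range (W.subtype ∘ b)))) := by rw [← map₂_span_span, ← hW]
    _ ≤ finrank K (span K (Set.range g)) := Submodule.finrank_mono (span_mono hsub)
    _ ≤ Fintype.card (Sym2 (Fin (finrank K W))) := finrank_range_le_card g
    _ = (finrank K W + 1).choose 2 := by rw [Sym2.card, Fintype.card_fin]

theorem Module.End.exists_eq_smul_of_apply_eq_smul_add_smul {K V : Type*} [Field K]
    [AddCommGroup V] [Module K V] {f : Module.End K V} {μ κ a : K} {v w : V}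
    (hμ : ¬ f.HasEigenvalue μ) (hw : f w = κ • w) (hv : f v = μ • v + a • w) :
    ∃ t : K, v = t • w := by
  have hker : ∀ x, f x = μ • x → x = 0 := fun x hx => by_contra fun hx0 =>
    hμ (hasEigenvalue_of_hasEigenvector ⟨mem_eigenspace_iff.2 hx, hx0⟩)
  by_cases hw0 : w = 0
  · exact ⟨0, by simpa [hw0] using hker v (by simpa [hw0] using hv)⟩
  have hκ : κ - μ ≠ 0 := fun h => hw0 (hker w (sub_eq_zero.1 h ▸ hw))
  refine ⟨a / (κ - μ), sub_eq_zero.1 (hker _ ?_)⟩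
  rw [map_sub, map_smul, hv, hw]
  match_scalars
  · ring
  · field_simp
    ring

namespace Matrix

variable {R V : Type*}

def symVecMulVec [CommSemiring R] : (V → R) →ₗ[R] (V → R) →ₗ[R] Matrix V V R :=
  vecMulVecBilin R R + (vecMulVecBilin R R).flip

@[simp]
theorem symVecMulVec_apply [CommSemiring R] (u v : V → R) :
    symVecMulVec u v = vecMulVec u v + vecMulVec v u := rfl

theorem symVecMulVec_comm [CommSemiring R] (u v : V → R) :
    symVecMulVec u v = symVecMulVec v u := add_comm _ _

variable [Fintype V] [DecidableEq V]

theorem rank_sub_smul_one_add_finrank_eigenspace [Field R] (M : Matrix V V R) (μ : R) :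
    (M - μ • 1).rank + finrank R (End.eigenspace (toLin' M) μ) = Fintype.card V := by
  have h : toLin' M - μ • 1 = (M - μ • 1).mulVecLin := by
    rw [← toLin'_apply', map_sub, map_smul, toLin'_one, End.one_eq_id]
  rw [End.eigenspace_def, h, rank, LinearMap.finrank_range_add_finrank_ker,
    finrank_fintype_fun_eq_card]

def sandwichMap [CommRing R] (B : Matrix V V R) : (V → R) × (V → R) →ₗ[R] Matrix V V R :=
  (LinearMap.mulLeft R B ∘ₗ LinearMap.mulRight R B ∘ₗ diagonalLinearMap V R R).coprod
    (symVecMulVec.flip 1)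

theorem sandwichMap_apply [CommRing R] (B : Matrix V V R) (c x : V → R) :
    sandwichMap B (c, x) = B * diagonal c * B + symVecMulVec x 1 := by
  simp [sandwichMap, Matrix.mul_assoc]

theorem sandwichMap_mulVec_one [CommRing R] {B : Matrix V V R} {κ : R} (hB : B *ᵥ 1 = κ • 1)
    (c x : V → R) :
    sandwichMap B (c, x) *ᵥ 1
      = κ • (B *ᵥ c) + (Fintype.card V : R) • x + (∑ i, x i) • 1 := by
  have hc : diagonal c *ᵥ 1 = c := by ext; simp [mulVec_diagonal]
  rw [sandwichMap_apply, add_mulVec, ← mulVec_mulVec, ← mulVec_mulVec, hB, mulVec_smul, hc,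
    mulVec_smul, symVecMulVec_apply, add_mulVec, vecMulVec_mulVec, vecMulVec_mulVec,
    op_smul_eq_smul, op_smul_eq_smul, add_assoc]
  simp [dotProduct]

theorem sandwichMap_mem_map₂ [Field R] [NeZero (2 : R)] {B : Matrix V V R} (hB : Bᵀ = B)
    {c x : V → R} (hx : x ∈ LinearMap.range B.mulVecLin)
    (h1 : 1 ∈ LinearMap.range B.mulVecLin) :
    sandwichMap B (c, x) ∈ Submodule.map₂ symVecMulVec
      (LinearMap.range B.mulVecLin) (LinearMap.range B.mulVecLin) := by
  have hcol : ∀ i, B.col i ∈ LinearMap.range B.mulVecLin := fun i =>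
    ⟨Pi.single i 1, mulVec_single_one B i⟩
  have hsum : B * diagonal c * B = ∑ i, (c i / 2) • symVecMulVec (B.col i) (B.col i) := by
    ext u v
    have hv : ∀ i, B i v = B v i := fun i => by rw [← transpose_apply B v i, hB]
    rw [mul_apply]
    simp only [mul_diagonal, sum_apply, smul_apply, symVecMulVec_apply, Matrix.add_apply,
      vecMulVec_apply, col_apply, smul_eq_mul, hv]
    refine Finset.sum_congr rfl fun i _ => ?_
    field_simp
    ring
  rw [sandwichMap_apply, hsum]
  exact add_mem (Submodule.sum_mem _ fun i _ => Submodule.smul_mem _ _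
    (Submodule.apply_mem_map₂ _ (hcol i) (hcol i))) (Submodule.apply_mem_map₂ _ hx h1)

end Matrix

namespace SimpleGraph

variable {R V : Type*} [Fintype V] [DecidableEq V] (G : SimpleGraph V) [DecidableRel G.Adj]

omit [DecidableEq V] in
theorem adjMatrix_mulVec_one_of_regular [NonAssocSemiring R] {k : ℕ}
    (hreg : G.IsRegularOfDegree k) : G.adjMatrix R *ᵥ 1 = (k : R) • 1 := by
  ext v
  simpa using G.adjMatrix_mulVec_const_apply_of_regular (a := (1 : R)) hreg

theorem adjMatrix_sub_smul_one_mulVec_one_of_regular [CommRing R] {k : ℕ}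
    (hreg : G.IsRegularOfDegree k) (lam : R) :
    (G.adjMatrix R - lam • 1) *ᵥ 1 = ((k : R) - lam) • 1 := by
  rw [sub_mulVec, smul_mulVec, one_mulVec, G.adjMatrix_mulVec_one_of_regular hreg, sub_smul]

omit [Fintype V] in
theorem transpose_adjMatrix_sub_smul_one [CommRing R] (lam : R) :
    (G.adjMatrix R - lam • 1)ᵀ = G.adjMatrix R - lam • 1 := by
  rw [transpose_sub, transpose_smul, transpose_one, transpose_adjMatrix]

theorem sandwichMap_adjMatrix_sub_smul_one_apply_self [CommRing R] (lam : R) (c x : V → R)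
    (u : V) :
    sandwichMap (G.adjMatrix R - lam • 1) (c, x) u u
      = (G.adjMatrix R *ᵥ c) u + lam ^ 2 * c u + 2 * x u := by
  have hentry : ∀ i, (G.adjMatrix R - lam • 1) u i * (G.adjMatrix R - lam • 1) i u
      = G.adjMatrix R u i + if u = i then lam ^ 2 else 0 := by
    intro i
    by_cases h : u = i
    · subst h
      simp [sq]
    · by_cases hadj : G.Adj u i <;> simp [h, hadj, G.adj_comm, Ne.symm h]
  have hsum : ((G.adjMatrix R - lam • 1) * diagonal c * (G.adjMatrix R - lam • 1)) u u
      = ∑ i, (G.adjMatrix R u i + if u = i then lam ^ 2 else 0) * c i := by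
    rw [mul_apply]
    simp only [mul_diagonal, ← hentry]
    exact Finset.sum_congr rfl fun i _ => by ring
  rw [sandwichMap_apply, Matrix.add_apply, hsum]
  simp [add_mul, Finset.sum_add_distrib, mulVec, dotProduct]
  ring

section OrderedField

variable [Field R] [LinearOrder R] [IsStrictOrderedRing R] {G} {k : ℕ} {lam : R}

theorem exists_eq_smul_one_of_sandwichMap_eq_zero (hreg : G.IsRegularOfDegree k)
    (h0 : lam ≠ 0) (h1 : lam ≠ -1) (hk : lam ≠ k)
    (hno : ¬ End.HasEigenvalue (toLin' (G.adjMatrix R))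
      (lam * (2 * lam - 2 * k - lam * Fintype.card V) / (2 * lam - 2 * k + Fintype.card V)))
    {c x : V → R} (h : sandwichMap (G.adjMatrix R - lam • 1) (c, x) = 0) :
    ∃ t : R, c = t • 1 := by
  set n : R := (Fintype.card V : R)
  set γ := 2 * lam - 2 * k + n
  set δ := lam * (2 * lam - 2 * k - lam * n)
  set s := ∑ i, x i
  have hdiag : ∀ u, (G.adjMatrix R *ᵥ c) u + lam ^ 2 * c u + 2 * x u = 0 := fun u => by
    rw [← G.sandwichMap_adjMatrix_sub_smul_one_apply_self, h, Matrix.zero_apply]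
  have hrow : ∀ u, (k - lam) * ((G.adjMatrix R *ᵥ c) u - lam * c u) + n * x u + s = 0 := by
    intro u
    have := congrFun
      (sandwichMap_mulVec_one (G.adjMatrix_sub_smul_one_mulVec_one_of_regular hreg lam) c x) u
    rw [h, zero_mulVec] at this
    simpa [sub_mulVec, smul_mulVec, eq_comm] using this
  have hlin : ∀ u, γ * (G.adjMatrix R *ᵥ c) u = δ * c u + 2 * s := fun u => by
    linear_combination n * hdiag u - 2 * hrow u
  by_cases hγ : γ = 0
  · have hδ : δ ≠ 0 := by
      have : δ = 2 * lam * (lam - k) * (1 + lam) := by linear_combination (-lam ^ 2) * hγ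
      rw [this]
      refine mul_ne_zero (mul_ne_zero (mul_ne_zero two_ne_zero h0) (sub_ne_zero.2 hk)) ?_
      contrapose! h1
      linear_combination h1
    refine ⟨-(2 * s) / δ, funext fun u => ?_⟩
    simp only [Pi.smul_apply, Pi.one_apply, smul_eq_mul, mul_one]
    field_simp
    linear_combination (G.adjMatrix R *ᵥ c) u * hγ - hlin u
  · refine End.exists_eq_smul_of_apply_eq_smul_add_smul (a := 2 * s / γ) hno
      (G.adjMatrix_mulVec_one_of_regular hreg) (funext fun u => ?_)
    simp only [toLin'_apply, Pi.add_apply, Pi.smul_apply, Pi.one_apply, smul_eq_mul, mul_one]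
    field_simp
    linear_combination hlin u

theorem eq_zero_of_sandwichMap_smul_one_eq_zero (hreg : G.IsRegularOfDegree k)
    (hrank : 2 ≤ (G.adjMatrix R - lam • 1).rank) {t : R} {x : V → R}
    (h : sandwichMap (G.adjMatrix R - lam • 1) (t • 1, x) = 0) : t = 0 := by
  set B := G.adjMatrix R - lam • 1
  have hBT : Bᵀ = B := G.transpose_adjMatrix_sub_smul_one lam
  have hx : ∀ u, x u = -(t * (k + lam ^ 2)) / 2 := fun u => by
    have := G.sandwichMap_adjMatrix_sub_smul_one_apply_self lam (t • 1) x u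
    rw [h, mulVec_smul, G.adjMatrix_mulVec_one_of_regular hreg] at this
    simp only [Matrix.zero_apply, Pi.smul_apply, Pi.one_apply, smul_eq_mul, mul_one] at this
    linear_combination -this / 2
  by_contra ht
  have hBB : B * Bᵀ = vecMulVec (((k : R) + lam ^ 2) • 1) 1 := by
    ext u v
    have := congrFun (congrFun h u) v
    rw [sandwichMap_apply, diagonal_smul, diagonal_one', Matrix.mul_smul, Matrix.mul_one,
      Matrix.smul_mul] at this
    simp only [Matrix.add_apply, Matrix.smul_apply, symVecMulVec_apply, vecMulVec_apply, hx,
      Pi.one_apply, Matrix.zero_apply, smul_eq_mul] at this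
    rw [hBT, vecMulVec_apply, Pi.smul_apply, smul_eq_mul, Pi.one_apply, Pi.one_apply, mul_one,
      mul_one]
    refine mul_left_cancel₀ ht ?_
    linear_combination this
  have := rank_self_mul_transpose B
  rw [hBB] at this
  have := rank_vecMulVec_le (((k : R) + lam ^ 2) • (1 : V → R)) (1 : V → R)
  omega

theorem sandwichMap_adjMatrix_sub_smul_one_injective (hreg : G.IsRegularOfDegree k)
    (h0 : lam ≠ 0) (h1 : lam ≠ -1) (hk : lam ≠ k)
    (hno : ¬ End.HasEigenvalue (toLin' (G.adjMatrix R))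
      (lam * (2 * lam - 2 * k - lam * Fintype.card V) / (2 * lam - 2 * k + Fintype.card V)))
    (hrank : 2 ≤ (G.adjMatrix R - lam • 1).rank) :
    Function.Injective (sandwichMap (G.adjMatrix R - lam • 1)) := by
  rw [← LinearMap.ker_eq_bot, LinearMap.ker_eq_bot']
  rintro ⟨c, x⟩ h
  obtain ⟨t, rfl⟩ := exists_eq_smul_one_of_sandwichMap_eq_zero hreg h0 h1 hk hno h
  obtain rfl := eq_zero_of_sandwichMap_smul_one_eq_zero hreg hrank h
  rw [zero_smul] at h ⊢
  refine Prod.ext rfl (funext fun u => ?_)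
  have := G.sandwichMap_adjMatrix_sub_smul_one_apply_self lam 0 x u
  simpa [h] using this.symm

theorem card_add_rank_le_choose (hreg : G.IsRegularOfDegree k)
    (h0 : lam ≠ 0) (h1 : lam ≠ -1) (hk : lam ≠ k)
    (hno : ¬ End.HasEigenvalue (toLin' (G.adjMatrix R))
      (lam * (2 * lam - 2 * k - lam * Fintype.card V) / (2 * lam - 2 * k + Fintype.card V)))
    (hrank : 2 ≤ (G.adjMatrix R - lam • 1).rank) :
    Fintype.card V + (G.adjMatrix R - lam • 1).rank
      ≤ ((G.adjMatrix R - lam • 1).rank + 1).choose 2 := by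
  set B := G.adjMatrix R - lam • 1
  set W := LinearMap.range B.mulVecLin
  have h1W : (1 : V → R) ∈ W := by
    refine ⟨((k : R) - lam)⁻¹ • 1, ?_⟩
    rw [LinearMap.map_smul, mulVecLin_apply, G.adjMatrix_sub_smul_one_mulVec_one_of_regular hreg,
      smul_smul, inv_mul_cancel₀ (sub_ne_zero.2 hk.symm), one_smul]
  set f := sandwichMap B ∘ₗ LinearMap.id.prodMap W.subtype
  have hf : Function.Injective f :=
    (sandwichMap_adjMatrix_sub_smul_one_injective hreg h0 h1 hk hno hrank).comp
      (Function.injective_id.prodMap Subtype.val_injective)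
  have hrange : LinearMap.range f ≤ Submodule.map₂ symVecMulVec W W := by
    rintro _ ⟨⟨c, x⟩, rfl⟩
    exact sandwichMap_mem_map₂ (G.transpose_adjMatrix_sub_smul_one lam) x.2 h1W
  calc Fintype.card V + B.rank = finrank R ((V → R) × W) := by
        rw [finrank_prod, finrank_fintype_fun_eq_card]; rfl
    _ = finrank R (LinearMap.range f) := (LinearMap.finrank_range_of_inj hf).symm
    _ ≤ finrank R (Submodule.map₂ symVecMulVec W W) := Submodule.finrank_mono hrange
    _ ≤ (B.rank + 1).choose 2 :=
        Submodule.finrank_map₂_le_choose_of_symm _ symVecMulVec_comm W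

end OrderedField

end SimpleGraph

theorem stmt_15_general (n k d : ℕ) (G : SimpleGraph (Fin n)) [DecidableRel G.Adj]
    (hreg : G.IsRegularOfDegree k)
    (lam : ℝ) (h0 : lam ≠ 0) (h1 : lam ≠ -1) (hk : lam ≠ k)
    (hmult : Module.finrank ℝ
      (Module.End.eigenspace (Matrix.toLin' (G.adjMatrix ℝ)) lam) = n - d)
    (hdn : d ≤ n) (hd2 : 2 ≤ d)
    (hno : ¬ Module.End.HasEigenvalue (Matrix.toLin' (G.adjMatrix ℝ))
      (lam * (2 * lam - 2 * k - lam * n) / (2 * lam - 2 * k + n))) :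
    n ≤ d * (d - 1) / 2 := by
  have hrank : (G.adjMatrix ℝ - lam • 1).rank = d := by
    have := (G.adjMatrix ℝ).rank_sub_smul_one_add_finrank_eigenspace lam
    rw [hmult, Fintype.card_fin] at this
    omega
  have hbound := G.card_add_rank_le_choose hreg h0 h1 hk (by simpa using hno) (hrank ▸ hd2)
  rw [hrank, Fintype.card_fin, Nat.choose_succ_succ', Nat.choose_one_right,
    Nat.choose_two_right] at hbound
  omega

/-- Let `A` be the adjacency matrix of a connected `k`-regular simple graph on `n` vertices,
`λ ∉ {0,−1,k}` an eigenvalue of `A` of multiplicity `n − d` with `d ≥ 2`. If `A` has no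
eigenvalue `λ(2λ − 2k − λn)/(2λ − 2k + n)`, then `n ≤ d(d−1)/2`. -/
theorem stmt_15 (n k d : ℕ) (G : SimpleGraph (Fin n)) [DecidableRel G.Adj]
    (hconn : G.Connected) (hreg : G.IsRegularOfDegree k)
    (lam : ℝ) (h0 : lam ≠ 0) (h1 : lam ≠ -1) (hk : lam ≠ k)
    (heig : Module.End.HasEigenvalue (Matrix.toLin' (G.adjMatrix ℝ)) lam)
    (hmult : Module.finrank ℝ
      (Module.End.eigenspace (Matrix.toLin' (G.adjMatrix ℝ)) lam) = n - d)
    (hdn : d ≤ n) (hd2 : 2 ≤ d)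
    (hno : ¬ Module.End.HasEigenvalue (Matrix.toLin' (G.adjMatrix ℝ))
      (lam * (2 * lam - 2 * k - lam * n) / (2 * lam - 2 * k + n))) :
    n ≤ d * (d - 1) / 2 :=
  stmt_15_general n k d G hreg lam h0 h1 hk hmult hdn hd2 hno
end

section
/- Let K be an n×n Hermitian matrix with distinct eigenvalues λ₁ > ⋯ > λ_s and main angles β₁,…,β_s, and let a be a real number. Then the characteristic polynomial of K + aJ (J the all-ones matrix) satisfies P_{K+aJ}(x) = P_K(x) · (1 + a·Σ_{i=1}^s n β_i²/(λ_i − x)) as rational functions, i.e., for all x not an eigenvalue of K. -/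
/-!
Write `𝟙` for the all-ones vector, so that `a • J = vecMulVec (a • 𝟙) 𝟙` has rank one.
The spectral decomposition gives `K - x • 1 = ∑ (λᵢ - x) • Pᵢ`, which is inverted by
`∑ (λᵢ - x)⁻¹ • Pᵢ` because the `Pᵢ` are complete orthogonal idempotents. The matrix
determinant lemma then yields `det (K - x • 1) * (1 + a * ∑ (λᵢ - x)⁻¹ * 𝟙 ⬝ᵥ Pᵢ 𝟙)`, and
`𝟙 ⬝ᵥ Pᵢ 𝟙 = ‖Pᵢ 𝟙‖² = n βᵢ²` since each `Pᵢ` is a Hermitian idempotent.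
-/

open Matrix

namespace OrthogonalIdempotents

variable {R A ι : Type*} [CommSemiring R] [Semiring A] [Algebra R A] [Fintype ι] {e : ι → A}

theorem sum_smul_mul_sum_smul (he : OrthogonalIdempotents e) (c d : ι → R) :
    (∑ i, c i • e i) * (∑ i, d i • e i) = ∑ i, (c i * d i) • e i := by
  classical
  simp only [Finset.sum_mul, Finset.mul_sum, smul_mul_smul_comm, he.mul_eq, smul_ite, smul_zero]
  simp

end OrthogonalIdempotents

namespace CompleteOrthogonalIdempotents

variable {A ι : Type*} [Ring A] [Fintype ι] {e : ι → A}

theorem sum_smul_sub_smul_one {R : Type*} [CommRing R] [Algebra R A]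
    (he : CompleteOrthogonalIdempotents e) (c : ι → R) (x : R) :
    ∑ i, c i • e i - x • 1 = ∑ i, (c i - x) • e i := by
  simp only [sub_smul, Finset.sum_sub_distrib, ← Finset.smul_sum, he.complete]

theorem sum_smul_mul_sum_inv_smul {K : Type*} [Field K] [Algebra K A]
    (he : CompleteOrthogonalIdempotents e) {c : ι → K} (hc : ∀ i, c i ≠ 0) :
    (∑ i, c i • e i) * (∑ i, (c i)⁻¹ • e i) = 1 := by
  simp only [he.toOrthogonalIdempotents.sum_smul_mul_sum_smul, mul_inv_cancel₀ (hc _), one_smul,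
    he.complete]

end CompleteOrthogonalIdempotents

namespace Matrix

variable {m α : Type*} [Fintype m]

theorem det_add_vecMulVec [DecidableEq m] [CommRing α] {A : Matrix m m α} (hA : IsUnit A.det)
    (u v : m → α) :
    (A + vecMulVec u v).det = A.det * (1 + v ⬝ᵥ A⁻¹ *ᵥ u) := by
  rw [vecMulVec_eq Unit, det_add_replicateCol_mul_replicateRow hA, Matrix.mul_assoc,
    ← replicateCol_mulVec, det_unique (1 + _), add_apply, one_apply_eq,
    replicateRow_mul_replicateCol_apply]

theorem IsHermitian.star_mulVec_dotProduct_mulVec [CommRing α] [StarRing α] {P : Matrix m m α}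
    (hP : P.IsHermitian) (hP_idem : IsIdempotentElem P) (v : m → α) :
    star (P *ᵥ v) ⬝ᵥ P *ᵥ v = star v ⬝ᵥ P *ᵥ v := by
  rw [star_mulVec, ← dotProduct_mulVec, hP.eq, mulVec_mulVec, hP_idem.eq]

end Matrix

theorem stmt_17_general (n s : ℕ) (K : Matrix (Fin n) (Fin n) ℂ)
    (lam : Fin s → ℝ)
    (P : Fin s → Matrix (Fin n) (Fin n) ℂ)
    (hPH : ∀ i, (P i).IsHermitian)
    (hPP : ∀ i j, P i * P j = if i = j then P i else 0)
    (hsum : ∑ i, P i = 1)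
    (hspec : K = ∑ i, (lam i : ℂ) • P i)
    (a x : ℝ) (hx : ∀ i, x ≠ lam i) :
    Matrix.det (K + (a : ℂ) • Matrix.of (fun _ _ : Fin n => (1 : ℂ)) - (x : ℂ) • 1)
      = Matrix.det (K - (x : ℂ) • 1) *
        (1 + (a : ℂ) * ∑ i,
          (n : ℂ) * ((star ((P i).mulVec fun _ => 1) ⬝ᵥ ((P i).mulVec fun _ => 1)) / n)
            / ((lam i : ℂ) - x)) := by
  have hP : CompleteOrthogonalIdempotents P :=
    ⟨OrthogonalIdempotents.iff_mul_eq.mpr hPP, hsum⟩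
  have hshift_ne : ∀ i, (lam i : ℂ) - x ≠ 0 := fun i =>
    sub_ne_zero.mpr (by exact_mod_cast (hx i).symm)
  have hright : (K - (x : ℂ) • 1) * ∑ i, ((lam i : ℂ) - x)⁻¹ • P i = 1 := by
    rw [hspec, hP.sum_smul_sub_smul_one, hP.sum_smul_mul_sum_inv_smul hshift_ne]
  have hJ : (a : ℂ) • of (fun _ _ : Fin n => (1 : ℂ))
      = vecMulVec ((a : ℂ) • fun _ => 1) (fun _ => 1) := by
    ext; simp [vecMulVec]
  rw [add_sub_right_comm, hJ, det_add_vecMulVec (isUnit_det_of_right_inverse hright),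
    inv_eq_right_inv hright]
  congr 2
  simp only [sum_mulVec, dotProduct_sum, smul_mulVec, mulVec_smul, dotProduct_smul, smul_eq_mul,
    Finset.mul_sum, (hPH _).star_mulVec_dotProduct_mulVec (hP.idem _)]
  refine Finset.sum_congr rfl fun i _ => ?_
  rw [mul_div_cancel_of_imp' fun hn => ?_, div_eq_inv_mul]
  · simp only [Pi.star_def, star_one]
  · obtain rfl : n = 0 := by exact_mod_cast hn
    exact dotProduct_of_isEmpty _ _

/-- Characteristic polynomial of a rank-one (all-ones) perturbation: with `K` Hermitian,
spectral decomposition `K = Σ λ_i P_i` (distinct eigenvalues `λ₁ > ⋯ > λ_s`, main angles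
`β_i² = ‖P_i 1‖²/n`), and `a ∈ ℝ`, for every `x` which is not an eigenvalue of `K`:
`det(K + aJ − xI) = det(K − xI) · (1 + a Σ_i n β_i²/(λ_i − x))`. -/
theorem stmt_17 (n s : ℕ) (K : Matrix (Fin n) (Fin n) ℂ) (hK : K.IsHermitian)
    (lam : Fin s → ℝ) (hanti : StrictAnti lam)
    (P : Fin s → Matrix (Fin n) (Fin n) ℂ)
    (hPH : ∀ i, (P i).IsHermitian)
    (hPP : ∀ i j, P i * P j = if i = j then P i else 0)
    (hsum : ∑ i, P i = 1)
    (hspec : K = ∑ i, (lam i : ℂ) • P i)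
    (a x : ℝ) (hx : ∀ i, x ≠ lam i) :
    Matrix.det (K + (a : ℂ) • Matrix.of (fun _ _ : Fin n => (1 : ℂ)) - (x : ℂ) • 1)
      = Matrix.det (K - (x : ℂ) • 1) *
        (1 + (a : ℂ) * ∑ i,
          (n : ℂ) * ((star ((P i).mulVec fun _ => 1) ⬝ᵥ ((P i).mulVec fun _ => 1)) / n)
            / ((lam i : ℂ) - x)) :=
  stmt_17_general n s K lam P hPH hPP hsum hspec a x hx
end

section
/- Let H be the Hermitian adjacency matrix (for some unimodular non-real ω) of a digraph Δ on n vertices, with largest eigenvalue λ₁ of multiplicity n − d₁, d₁ ≥ 2 and λ₁ ∉ {0, −1}. Then the n vectors obtained as columns of (λ₁ I − H)^{1/2} lie on a sphere of radius √λ₁ in ℂ^{d₁}, their pairwise Hermitian inner products lie in {0, −1/λ₁·1, −ω/λ₁, −conj(ω)/λ₁} after normalization, and consequently n ≤ d₁(3d₁+5)/2 − 1. -/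
/-!
Since `λ₁ I - H` is positive semidefinite of rank `d₁`, it is `Vᴴ V` for a `d₁ × n` matrix `V`,
whose columns are the vectors. With `t = 1 + 2 Re ω`, the polynomial `Q(x) = t (x + |x|²) + x̄ + x²`
vanishes on `{0, -1, -ω, -ω̄}`, so applied entrywise to `Vᴴ V` it gives `c I` with
`c = (t + 1)(λ₁ + λ₁²)`, positive as `λ₁ = ‖v‖² ≠ 0` and `|Re ω| < 1`. Each monomial of `Q`,
applied entrywise to a Gram matrix, is again a Gram matrix: of the columns of `V`, `V ⊗ V̄`, `V̄`
and of the symmetric square of `V`, of heights `d₁, d₁², d₁, d₁(d₁+1)/2`. If `t ≤ 0`, dropping the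
`t`-terms leaves `c I` below a Gram matrix of height `d₁ + d₁(d₁+1)/2`, which bounds its rank `n`.
If `t > 0`, `c I` is a Gram matrix of height `d₁(3d₁+5)/2`; were that equal to `n`, the stacked
matrix would be a scaled unitary, so its rows would be orthogonal of norm `√c` as well, and summing
the inner products of the `V ⊗ V̄` rows over the pairs `(i,i), (j,j)` and over the pairs
`(i,j), (i,j)` would give `d₁ c = d₁² c`.
-/

open Matrix

/-- The Hermitian adjacency matrix `H_ω` of a digraph with arc relation `E`:
entry `1` on digons, `ω` on forward-only arcs, `conj ω` on backward-only arcs, `0` otherwise. -/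
noncomputable def hermAdj (n : ℕ) (E : Fin n → Fin n → Prop) [DecidableRel E] (ω : ℂ) :
    Matrix (Fin n) (Fin n) ℂ :=
  Matrix.of fun x y =>
    if E x y ∧ E y x then 1 else if E x y then ω else if E y x then starRingEnd ℂ ω else 0

open ComplexConjugate
open scoped ComplexOrder

theorem Sym2.card_filter_mk_eq {ι : Type*} [Fintype ι] [DecidableEq ι] (z : Sym2 ι) :
    (Finset.univ.filter fun p : ι × ι => s(p.1, p.2) = z).card = if z.IsDiag then 1 else 2 := by
  induction z using Sym2.ind with
  | _ i j =>
    by_cases h : i = j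
    · subst h
      have : (Finset.univ.filter fun p : ι × ι => s(p.1, p.2) = s(i, i)) = {(i, i)} := by
        ext ⟨a, b⟩; simp
      rw [this, Finset.card_singleton, if_pos (Sym2.mk_isDiag_iff.mpr rfl)]
    · have : (Finset.univ.filter fun p : ι × ι => s(p.1, p.2) = s(i, j)) = {(i, j), (j, i)} := by
        ext ⟨a, b⟩; simp
      rw [this, Finset.card_pair (by simp [h]), if_neg (by simpa using h)]

theorem Sym2.sum_smul_lift {ι M : Type*} [Fintype ι] [DecidableEq ι] [AddCommMonoid M]
    (f : {f : ι → ι → M // ∀ i j, f i j = f j i}) :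
    ∑ z : Sym2 ι, (if z.IsDiag then 1 else 2) • Sym2.lift f z = ∑ i, ∑ j, f.1 i j := by
  rw [← Fintype.sum_prod_type', ← Finset.sum_fiberwise Finset.univ fun p : ι × ι => s(p.1, p.2)]
  refine Finset.sum_congr rfl fun z _ => ?_
  rw [← Sym2.card_filter_mk_eq, ← Finset.sum_const]
  refine Finset.sum_congr rfl fun p hp => ?_
  rw [(Finset.mem_filter.mp hp).2.symm]
  rfl

namespace Matrix

section Factorization

variable {m n 𝕜 : Type*} [Fintype m] [Fintype n] [RCLike 𝕜]

omit [Fintype n] in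
theorem exists_fin_conjTranspose_mul_self_eq {R : Type*} [Semiring R] [StarRing R]
    (C : Matrix m n R) (s : Finset m) (hs : ∀ i ∉ s, C i = 0) {d : ℕ} (hd : s.card ≤ d) :
    ∃ V : Matrix (Fin d) n R, Vᴴ * V = Cᴴ * C := by
  classical
  obtain ⟨e⟩ : Nonempty (s ↪ Fin d) :=
    Function.Embedding.nonempty_of_card_le (by simpa using hd)
  let P : Matrix (Fin d) s R := (1 : Matrix (Fin d) (Fin d) R).submatrix id e
  let Cs : Matrix s n R := C.submatrix Subtype.val id
  have hP : Pᴴ * P = 1 := by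
    rw [conjTranspose_submatrix, conjTranspose_one, ← submatrix_mul _ _ _ _ _ Function.bijective_id,
      Matrix.one_mul, submatrix_one _ e.injective]
  have hCs : Csᴴ * Cs = Cᴴ * C := by
    ext u w
    simp only [Cs, mul_apply, conjTranspose_apply, submatrix_apply, id_eq]
    exact (Finset.sum_coe_sort s fun i => star (C i u) * C i w).trans
      (Finset.sum_subset (Finset.subset_univ s) fun i _ hi => by simp [hs i hi])
  refine ⟨P * Cs, ?_⟩
  rw [conjTranspose_mul, Matrix.mul_assoc, ← Matrix.mul_assoc Pᴴ, hP, Matrix.one_mul, hCs]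

variable [DecidableEq n]

theorem PosSemidef.exists_fin_conjTranspose_mul_self_eq {B : Matrix n n 𝕜} (hB : B.PosSemidef)
    {d : ℕ} (hd : B.rank ≤ d) : ∃ V : Matrix (Fin d) n 𝕜, Vᴴ * V = B := by
  set μ := hB.1.eigenvalues
  set U : Matrix n n 𝕜 := (hB.1.eigenvectorUnitary : Matrix n n 𝕜)
  set C := diagonal (fun i => ((√(μ i) : ℝ) : 𝕜)) * star U
  obtain ⟨V, hV⟩ := Matrix.exists_fin_conjTranspose_mul_self_eq C {i | μ i ≠ 0}
    (fun i hi => by ext j; simp_all [C])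
    (by simpa [hB.1.rank_eq_card_non_zero_eigs, Fintype.card_subtype] using hd)
  refine ⟨V, hV.trans ?_⟩
  conv_rhs => rw [hB.1.spectral_theorem, Unitary.conjStarAlgAut_apply]
  simp only [C, conjTranspose_mul, star_eq_conjTranspose, conjTranspose_conjTranspose,
    diagonal_conjTranspose, Matrix.mul_assoc, ← Matrix.mul_assoc (diagonal _),
    diagonal_mul_diagonal]
  congr 3
  ext i
  simp only [Function.comp_apply, Pi.star_apply, RCLike.star_def, RCLike.conj_ofReal]
  rw [← RCLike.ofReal_mul, Real.mul_self_sqrt (hB.eigenvalues_nonneg i)]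

theorem IsHermitian.hasEigenvalue_eigenvalues {A : Matrix n n 𝕜} (hA : A.IsHermitian) (i : n) :
    Module.End.HasEigenvalue (toLin' A) (hA.eigenvalues i : 𝕜) := by
  rw [Module.End.hasEigenvalue_iff_mem_spectrum, spectrum_toLin']
  exact spectrum.algebraMap_mem_iff 𝕜 |>.mpr (hA.eigenvalues_mem_spectrum_real i)

theorem IsHermitian.posSemidef_smul_one_sub {A : Matrix n n 𝕜} (hA : A.IsHermitian) {c : ℝ}
    (hc : ∀ i, hA.eigenvalues i ≤ c) : ((c : 𝕜) • 1 - A).PosSemidef := by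
  have hdiag : (c : 𝕜) • 1 - diagonal (RCLike.ofReal ∘ hA.eigenvalues) =
      diagonal fun i => ((c - hA.eigenvalues i : ℝ) : 𝕜) := by
    ext i j
    by_cases h : i = j <;> simp [h, Algebra.algebraMap_eq_smul_one, sub_smul]
  rw [hA.spectral_theorem, ← map_one (Unitary.conjStarAlgAut 𝕜 _ hA.eigenvectorUnitary),
    ← map_smul, ← map_sub, hdiag, Unitary.conjStarAlgAut_apply, star_eq_conjTranspose]
  exact (PosSemidef.diagonal fun i => by simpa using hc i).mul_mul_conjTranspose_same _

theorem rank_smul_one_sub_add_finrank_eigenspace {K : Type*} [Field K] (A : Matrix n n K) (μ : K) :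
    (μ • 1 - A).rank + Module.finrank K (Module.End.eigenspace (toLin' A) μ) =
      Fintype.card n := by
  have : Module.End.eigenspace (toLin' A) μ = LinearMap.ker (μ • 1 - A).mulVecLin := by
    ext x
    simp [sub_eq_zero, eq_comm]
  rw [rank, this, LinearMap.finrank_range_add_finrank_ker, Module.finrank_fintype_fun_eq_card]

theorem IsHermitian.exists_conjTranspose_mul_self_eq_smul_one_sub {A : Matrix n n 𝕜}
    (hA : A.IsHermitian) {lam : ℝ}
    (hmax : ∀ μ : ℝ, Module.End.HasEigenvalue (toLin' A) (μ : 𝕜) → μ ≤ lam) {d : ℕ}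
    (hmult : Module.finrank 𝕜 (Module.End.eigenspace (toLin' A) (lam : 𝕜)) =
      Fintype.card n - d) :
    ∃ V : Matrix (Fin d) n 𝕜, Vᴴ * V = (lam : 𝕜) • 1 - A := by
  have hrank := rank_smul_one_sub_add_finrank_eigenspace A (lam : 𝕜)
  exact (hA.posSemidef_smul_one_sub fun i => hmax _ (hA.hasEigenvalue_eigenvalues i))
    |>.exists_fin_conjTranspose_mul_self_eq (by omega)

theorem card_le_card_of_posSemidef_conjTranspose_mul_self_sub (M : Matrix m n 𝕜) {c : ℝ}
    (hc : 0 < c) (h : (Mᴴ * M - (c : 𝕜) • 1).PosSemidef) : Fintype.card n ≤ Fintype.card m := by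
  have hpos : (Mᴴ * M).PosDef := by
    have hc1 : ((c : 𝕜) • (1 : Matrix n n 𝕜)).PosDef := PosDef.one.smul (RCLike.ofReal_pos.mpr hc)
    simpa using hc1.add_posSemidef h
  calc Fintype.card n = (Mᴴ * M).rank := (rank_of_isUnit _ hpos.isUnit).symm
    _ = M.rank := rank_conjTranspose_mul_self M
    _ ≤ Fintype.card m := rank_le_card_height M

theorem mul_conjTranspose_eq_smul_one_of_card_eq [DecidableEq m] (M : Matrix m n 𝕜)
    {c : 𝕜} (hc : c ≠ 0) (hcard : Fintype.card m = Fintype.card n) (h : Mᴴ * M = c • 1) :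
    M * Mᴴ = c • 1 := by
  have h1 : (c⁻¹ • Mᴴ) * M = 1 := by rw [smul_mul, h, smul_smul, inv_mul_cancel₀ hc, one_smul]
  have h2 := (mul_eq_one_comm_of_equiv (Fintype.equivOfCardEq hcard.symm)).mp h1
  rwa [Matrix.mul_smul, inv_smul_eq_iff₀ hc] at h2

end Factorization

section Lifts

variable {ι κ m₁ m₂ n R : Type*} [Fintype ι] [Fintype κ]

def khatriRao [Mul R] (A : Matrix ι n R) (B : Matrix κ n R) : Matrix (ι × κ) n R :=
  of fun p u => A p.1 u * B p.2 u

theorem conjTranspose_khatriRao_mul_khatriRao [CommSemiring R] [StarRing R]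
    (A : Matrix ι n R) (B : Matrix κ n R) :
    (khatriRao A B)ᴴ * khatriRao A B = (Aᴴ * A) ⊙ (Bᴴ * B) := by
  ext u w
  simp only [mul_apply, hadamard_apply, conjTranspose_apply, khatriRao, of_apply, star_mul',
    Fintype.sum_prod_type, Finset.sum_mul_sum]
  exact Finset.sum_congr rfl fun i _ => Finset.sum_congr rfl fun k _ => by ring

/-- For `K = r • khatriRao V (V.map conj)`, both `Σᵢ Σⱼ (K Kᴴ) (i, i) (j, j)` and `Σₚ (K Kᴴ) p p`
equal `|r|² Σᵤ (Σᵢ |V i u|²)²`, whereas for `c • 1` they are `card ι • c` and `(card ι)² • c`. -/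
theorem smul_khatriRao_mul_conjTranspose_ne_smul_one [Fintype n] [DecidableEq ι]
    (V : Matrix ι n ℂ) (r : ℂ) {c : ℂ} (hc : c ≠ 0) (hι : 2 ≤ Fintype.card ι) :
    (r • khatriRao V (V.map conj)) * (r • khatriRao V (V.map conj))ᴴ ≠ c • 1 := by
  set K := r • khatriRao V (V.map conj)
  have htrace : ∑ i, ∑ j, (K * Kᴴ) (i, i) (j, j) = ∑ p, (K * Kᴴ) p p := by
    simp only [K, mul_apply, conjTranspose_apply, smul_apply, khatriRao, of_apply, map_apply,
      Fintype.sum_prod_type, smul_eq_mul, star_mul', Complex.star_def, Complex.conj_conj]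
    exact Finset.sum_congr rfl fun i _ => Finset.sum_congr rfl fun j _ =>
      Finset.sum_congr rfl fun u _ => by ring
  intro h
  simp only [h, smul_apply, one_apply, Prod.mk.injEq, and_self, smul_eq_mul, mul_ite, mul_one,
    mul_zero, Finset.sum_ite_eq, Finset.mem_univ, if_true, Finset.sum_const, Finset.card_univ,
    Fintype.card_prod, nsmul_eq_mul] at htrace
  have hcard : Fintype.card ι = Fintype.card ι * Fintype.card ι := by
    exact_mod_cast mul_right_cancel₀ hc htrace
  nlinarith

/-- The weight `√2` off the diagonal accounts for the two ordered pairs over each unordered one. -/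
noncomputable def symSquare [DecidableEq ι] (A : Matrix ι n ℂ) : Matrix (Sym2 ι) n ℂ :=
  of fun z u => (if z.IsDiag then 1 else (√2 : ℂ)) *
    Sym2.lift ⟨fun i j => A i u * A j u, fun _ _ => mul_comm _ _⟩ z

theorem conjTranspose_symSquare_mul_symSquare [DecidableEq ι] (A : Matrix ι n ℂ) :
    (symSquare A)ᴴ * symSquare A = (Aᴴ * A) ⊙ (Aᴴ * A) := by
  ext u w
  let f : {f : ι → ι → ℂ // ∀ i j, f i j = f j i} :=
    ⟨fun i j => conj (A i u * A j u) * (A i w * A j w), fun i j => by simp only [mul_comm]⟩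
  have hterm : ∀ z, star (symSquare A z u) * symSquare A z w =
      (if z.IsDiag then 1 else 2) • Sym2.lift f z := by
    intro z
    induction z using Sym2.ind with
    | _ i j =>
      have h2 : (√2 : ℂ) * √2 = 2 := by norm_cast; simp
      by_cases h : i = j
      · simp [symSquare, f, h]
      · simp only [symSquare, f, of_apply, Sym2.lift_mk, Sym2.mk_isDiag_iff, h, if_false,
          star_mul', Complex.star_def, Complex.conj_ofReal]
        rw [nsmul_eq_mul, map_mul]
        linear_combination (conj (A i u) * conj (A j u) * (A i w * A j w)) * h2
  simp only [mul_apply, conjTranspose_apply, hadamard_apply]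
  rw [Finset.sum_congr rfl fun z _ => hterm z, Sym2.sum_smul_lift, Finset.sum_mul_sum]
  simp only [f, Complex.star_def, map_mul]
  exact Finset.sum_congr rfl fun i _ => Finset.sum_congr rfl fun j _ => by ring

theorem conjTranspose_fromRows_mul_fromRows [Fintype m₁] [Fintype m₂] [Semiring R] [StarRing R]
    (A : Matrix m₁ n R) (B : Matrix m₂ n R) :
    (fromRows A B)ᴴ * fromRows A B = Aᴴ * A + Bᴴ * B := by
  rw [conjTranspose_fromRows_eq_fromCols_conjTranspose, fromCols_mul_fromRows]

theorem conjTranspose_smul_mul_smul [Fintype m₁] [CommSemiring R] [StarRing R] (r : R)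
    (A : Matrix m₁ n R) : (r • A)ᴴ * (r • A) = (star r * r) • (Aᴴ * A) := by
  rw [conjTranspose_smul, Matrix.smul_mul, Matrix.mul_smul, smul_smul]

theorem conjTranspose_map_conj_mul_map_conj (A : Matrix ι n ℂ) :
    (A.map conj)ᴴ * A.map conj = (Aᴴ * A).map conj := by
  rw [← conjTranspose_map (A := A) (conj : ℂ → ℂ) fun _ => rfl, Matrix.map_mul]

def liftAbs (V : Matrix ι n ℂ) : Matrix (ι ⊕ ι × ι) n ℂ :=
  fromRows V (khatriRao V (V.map conj))

noncomputable def liftConj [DecidableEq ι] (V : Matrix ι n ℂ) : Matrix (ι ⊕ Sym2 ι) n ℂ :=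
  fromRows (V.map conj) (symSquare V)

theorem conjTranspose_liftAbs_mul_liftAbs (V : Matrix ι n ℂ) :
    (liftAbs V)ᴴ * liftAbs V = Vᴴ * V + (Vᴴ * V) ⊙ (Vᴴ * V).map conj := by
  rw [liftAbs, conjTranspose_fromRows_mul_fromRows, conjTranspose_khatriRao_mul_khatriRao,
    conjTranspose_map_conj_mul_map_conj]

theorem conjTranspose_liftConj_mul_liftConj [DecidableEq ι] (V : Matrix ι n ℂ) :
    (liftConj V)ᴴ * liftConj V = (Vᴴ * V).map conj + (Vᴴ * V) ⊙ (Vᴴ * V) := by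
  rw [liftConj, conjTranspose_fromRows_mul_fromRows, conjTranspose_symSquare_mul_symSquare,
    conjTranspose_map_conj_mul_map_conj]

end Lifts

end Matrix

def annihilator (t : ℝ) (x : ℂ) : ℂ := t * (x + x * conj x) + (conj x + x ^ 2)

theorem annihilator_ofReal (t x : ℝ) : annihilator t x = ((t + 1) * (x + x ^ 2) : ℝ) := by
  simp only [annihilator, Complex.conj_ofReal]
  push_cast
  ring

theorem annihilator_eq_zero {ω x : ℂ} (hω : ‖ω‖ = 1)
    (hx : x ∈ ({0, -1, -ω, -conj ω} : Set ℂ)) : annihilator (1 + 2 * ω.re) x = 0 := by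
  have hωω : ω * conj ω = 1 := by
    rw [Complex.mul_conj, Complex.normSq_eq_norm_sq, hω]; norm_num
  have ht : ((1 + 2 * ω.re : ℝ) : ℂ) = 1 + ω + conj ω := by
    push_cast; rw [add_assoc, Complex.add_conj]; push_cast; ring
  rw [annihilator, ht]
  rcases hx with rfl | rfl | rfl | rfl
  · simp
  · simp
  · simp only [map_neg]; linear_combination (ω + conj ω) * hωω
  · simp only [map_neg, Complex.conj_conj]; linear_combination (ω + conj ω) * hωω

theorem map_annihilator_conjTranspose_mul_self {ι n : Type*} [Fintype ι] [DecidableEq ι]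
    (V : Matrix ι n ℂ) (t : ℝ) :
    (Vᴴ * V).map (annihilator t) =
      (t : ℂ) • ((liftAbs V)ᴴ * liftAbs V) + (liftConj V)ᴴ * liftConj V := by
  rw [conjTranspose_liftAbs_mul_liftAbs, conjTranspose_liftConj_mul_liftConj]
  ext u w
  simp only [map_apply, Matrix.add_apply, Matrix.smul_apply, hadamard_apply, smul_eq_mul,
    annihilator]
  ring

theorem map_annihilator_eq_smul_one {n : Type*} [DecidableEq n] {ω : ℂ} (hω : ‖ω‖ = 1)
    {lam : ℝ} (G : Matrix n n ℂ) (hdiag : ∀ u, G u u = lam)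
    (hoff : ∀ u w, u ≠ w → G u w ∈ ({0, -1, -ω, -conj ω} : Set ℂ)) :
    G.map (annihilator (1 + 2 * ω.re)) = (((2 + 2 * ω.re) * (lam + lam ^ 2) : ℝ) : ℂ) • 1 := by
  ext u w
  rcases eq_or_ne u w with rfl | huw
  · rw [map_apply, hdiag, annihilator_ofReal, Matrix.smul_apply, one_apply_eq, smul_eq_mul,
      mul_one]
    congr 2
    ring
  · simpa [huw] using annihilator_eq_zero hω (hoff u w huw)

theorem Complex.star_sqrt_mul_sqrt {a : ℝ} (ha : 0 ≤ a) : star (√a : ℂ) * √a = a := by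
  rw [Complex.star_def, Complex.conj_ofReal, ← Complex.ofReal_mul, Real.mul_self_sqrt ha]

section AbsoluteBound

variable {ι n : Type*} [Fintype ι] [DecidableEq ι] [Fintype n] [DecidableEq n]
  (V : Matrix ι n ℂ) {t c : ℝ}

theorem card_le_of_map_annihilator_eq_smul_one_of_nonpos (ht : t ≤ 0) (hc : 0 < c)
    (hQ : (Vᴴ * V).map (annihilator t) = (c : ℂ) • 1) :
    Fintype.card n ≤ Fintype.card (ι ⊕ Sym2 ι) := by
  have hP : (liftConj V)ᴴ * liftConj V - (c : ℂ) • 1 =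
      ((√(-t) : ℂ) • liftAbs V)ᴴ * ((√(-t) : ℂ) • liftAbs V) := by
    rw [conjTranspose_smul_mul_smul, Complex.star_sqrt_mul_sqrt (neg_nonneg.mpr ht), ← hQ,
      map_annihilator_conjTranspose_mul_self]
    push_cast
    rw [neg_smul]
    abel
  exact card_le_card_of_posSemidef_conjTranspose_mul_self_sub (liftConj V) hc
    (hP ▸ posSemidef_conjTranspose_mul_self _)

theorem card_lt_of_map_annihilator_eq_smul_one_of_pos (ht : 0 < t) (hc : 0 < c)
    (hQ : (Vᴴ * V).map (annihilator t) = (c : ℂ) • 1) (hι : 2 ≤ Fintype.card ι) :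
    Fintype.card n < Fintype.card ((ι ⊕ ι × ι) ⊕ (ι ⊕ Sym2 ι)) := by
  set M := fromRows ((√t : ℂ) • liftAbs V) (liftConj V)
  have hM : Mᴴ * M = (c : ℂ) • 1 := by
    rw [conjTranspose_fromRows_mul_fromRows, conjTranspose_smul_mul_smul,
      Complex.star_sqrt_mul_sqrt ht.le, ← map_annihilator_conjTranspose_mul_self, hQ]
  refine lt_of_le_of_ne (card_le_card_of_posSemidef_conjTranspose_mul_self_sub M hc
    (by simpa [hM] using PosSemidef.zero)) fun hcard => ?_
  have hc0 : (c : ℂ) ≠ 0 := Complex.ofReal_ne_zero.mpr hc.ne'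
  have hMM := mul_conjTranspose_eq_smul_one_of_card_eq M hc0 hcard.symm hM
  let f : ι × ι → (ι ⊕ ι × ι) ⊕ (ι ⊕ Sym2 ι) := Sum.inl ∘ Sum.inr
  have hsub : M.submatrix f id = (√t : ℂ) • khatriRao V (V.map conj) := by
    ext p u
    simp [M, liftAbs, f]
  apply smul_khatriRao_mul_conjTranspose_ne_smul_one V (√t) hc0 hι
  rw [← hsub, conjTranspose_submatrix, ← submatrix_mul _ _ _ _ _ Function.bijective_id, hMM]
  exact congrArg ((c : ℂ) • · : Matrix (ι × ι) (ι × ι) ℂ → _)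
    (submatrix_one _ (Sum.inl_injective.comp Sum.inr_injective))

end AbsoluteBound

theorem card_le_of_conjTranspose_mul_self_mem {d n : ℕ} (V : Matrix (Fin d) (Fin n) ℂ)
    {ω : ℂ} (hω : ‖ω‖ = 1) (hωim : ω.im ≠ 0) {lam : ℝ} (hlam : 0 < lam) (hd : 2 ≤ d)
    (hdiag : ∀ u, (Vᴴ * V) u u = lam)
    (hoff : ∀ u w, u ≠ w → (Vᴴ * V) u w ∈ ({0, -1, -ω, -conj ω} : Set ℂ)) :
    n ≤ d * (3 * d + 5) / 2 - 1 := by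
  have hre : ω.re ^ 2 < 1 := by
    have := Complex.sq_norm ω
    rw [hω, Complex.normSq_apply] at this
    nlinarith [mul_self_pos.mpr hωim]
  have hc : 0 < (2 + 2 * ω.re) * (lam + lam ^ 2) := by
    have : 0 < 2 + 2 * ω.re := by nlinarith
    positivity
  have hQ := map_annihilator_eq_smul_one hω _ hdiag hoff
  have hchoose : 2 * (d + 1).choose 2 = d * d + d := by
    rw [Nat.choose_two_right, Nat.mul_div_cancel' (Nat.even_mul_pred_self _).two_dvd,
      Nat.add_sub_cancel]
    ring
  have hbound : d * (3 * d + 5) / 2 = 2 * d + d * d + (d + 1).choose 2 := by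
    rw [show d * (3 * d + 5) = 2 * (2 * d + d * d + (d + 1).choose 2) by nlinarith [hchoose],
      Nat.mul_div_cancel_left _ two_pos]
  rcases le_or_gt (1 + 2 * ω.re) 0 with ht | ht
  · have := card_le_of_map_annihilator_eq_smul_one_of_nonpos V ht hc hQ
    simp only [Fintype.card_fin, Fintype.card_sum, Sym2.card] at this
    omega
  · have := card_lt_of_map_annihilator_eq_smul_one_of_pos V ht hc hQ (by simpa using hd)
    simp only [Fintype.card_fin, Fintype.card_sum, Fintype.card_prod, Sym2.card] at this
    omega

theorem hermAdj_isHermitian (n : ℕ) (E : Fin n → Fin n → Prop) [DecidableRel E] (ω : ℂ) :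
    (hermAdj n E ω).IsHermitian := by
  ext u w
  simp only [conjTranspose_apply, hermAdj, of_apply]
  by_cases h₁ : E u w <;> by_cases h₂ : E w u <;> simp [h₁, h₂]

theorem hermAdj_apply_self {n : ℕ} {E : Fin n → Fin n → Prop} [DecidableRel E]
    (hirr : ∀ x, ¬ E x x) (ω : ℂ) (u : Fin n) : hermAdj n E ω u u = 0 := by
  simp [hermAdj, hirr u]

theorem hermAdj_apply_mem (n : ℕ) (E : Fin n → Fin n → Prop) [DecidableRel E] (ω : ℂ)
    (u w : Fin n) : hermAdj n E ω u w ∈ ({0, 1, ω, conj ω} : Set ℂ) := by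
  simp only [hermAdj, of_apply]
  split_ifs <;> simp

theorem stmt_19_general (n d : ℕ) (E : Fin n → Fin n → Prop) [DecidableRel E]
    (hirr : ∀ x, ¬ E x x) (ω : ℂ) (hωabs : ‖ω‖ = 1) (hωim : ω.im ≠ 0)
    (lam : ℝ) (h0 : lam ≠ 0)
    (hmax : ∀ μ : ℝ, Module.End.HasEigenvalue (Matrix.toLin' (hermAdj n E ω)) (μ : ℂ) →
      μ ≤ lam)
    (hd2 : 2 ≤ d)
    (hmult : Module.finrank ℂ
      (Module.End.eigenspace (Matrix.toLin' (hermAdj n E ω)) (lam : ℂ)) = n - d) :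
    (∃ v : Fin n → (Fin d → ℂ),
      (∀ u, star (v u) ⬝ᵥ v u = (lam : ℂ)) ∧
      (∀ u w, u ≠ w → (star (v u) ⬝ᵥ v w) / (lam : ℂ) ∈
        ({0, -1 / (lam : ℂ), -ω / (lam : ℂ), -(starRingEnd ℂ ω) / (lam : ℂ)} : Set ℂ))) ∧
    n ≤ d * (3 * d + 5) / 2 - 1 := by
  obtain ⟨V, hV⟩ := (hermAdj_isHermitian n E ω).exists_conjTranspose_mul_self_eq_smul_one_sub hmax
    (d := d) (by simpa using hmult)
  have hdiag : ∀ u, (Vᴴ * V) u u = lam := fun u => by simp [hV, hermAdj_apply_self hirr]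
  have hoff : ∀ u w, u ≠ w → (Vᴴ * V) u w ∈ ({0, -1, -ω, -conj ω} : Set ℂ) := fun u w huw => by
    have h := hermAdj_apply_mem n E ω u w
    simp only [Set.mem_insert_iff, Set.mem_singleton_iff] at h
    rw [hV, Matrix.sub_apply, Matrix.smul_apply, one_apply_ne huw, smul_zero, zero_sub]
    rcases h with h | h | h | h <;> simp [h]
  refine ⟨⟨fun u k => V k u, hdiag, fun u w huw => ?_⟩, ?_⟩
  · change (Vᴴ * V) u w / (lam : ℂ) ∈ _
    have h := hoff u w huw
    simp only [Set.mem_insert_iff, Set.mem_singleton_iff] at h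
    rcases h with h | h | h | h <;> simp [h, neg_div]
  · rcases Nat.eq_zero_or_pos n with rfl | hn
    · exact Nat.zero_le _
    have hlam : 0 < lam := by
      have := (posSemidef_conjTranspose_mul_self V).diag_nonneg (i := ⟨0, hn⟩)
      rw [hdiag] at this
      exact lt_of_le_of_ne (Complex.zero_le_real.mp this) h0.symm
    exact card_le_of_conjTranspose_mul_self_mem V hωabs hωim hlam hd2 hdiag hoff

/-- Let `H = H_ω(Δ)` (`ω` unimodular, non-real) have largest eigenvalue `λ₁ ∉ {0,−1}` of
multiplicity `n − d₁`, `d₁ ≥ 2`. Then there are `n` vectors in `ℂ^{d₁}` on the sphere of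
radius `√λ₁` (i.e. `⟨v,v⟩ = λ₁`) whose normalized pairwise Hermitian inner products lie in
`{0, −1/λ₁, −ω/λ₁, −conj(ω)/λ₁}`, and consequently `n ≤ d₁(3d₁+5)/2 − 1`. -/
theorem stmt_19 (n d : ℕ) (E : Fin n → Fin n → Prop) [DecidableRel E]
    (hirr : ∀ x, ¬ E x x) (ω : ℂ) (hωabs : ‖ω‖ = 1) (hωim : ω.im ≠ 0)
    (lam : ℝ) (h0 : lam ≠ 0) (h1 : lam ≠ -1)
    (heig : Module.End.HasEigenvalue (Matrix.toLin' (hermAdj n E ω)) (lam : ℂ))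
    (hmax : ∀ μ : ℝ, Module.End.HasEigenvalue (Matrix.toLin' (hermAdj n E ω)) (μ : ℂ) →
      μ ≤ lam)
    (hd2 : 2 ≤ d) (hdn : d ≤ n)
    (hmult : Module.finrank ℂ
      (Module.End.eigenspace (Matrix.toLin' (hermAdj n E ω)) (lam : ℂ)) = n - d) :
    (∃ v : Fin n → (Fin d → ℂ),
      (∀ u, star (v u) ⬝ᵥ v u = (lam : ℂ)) ∧
      (∀ u w, u ≠ w → (star (v u) ⬝ᵥ v w) / (lam : ℂ) ∈
        ({0, -1 / (lam : ℂ), -ω / (lam : ℂ), -(starRingEnd ℂ ω) / (lam : ℂ)} : Set ℂ))) ∧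
    n ≤ d * (3 * d + 5) / 2 - 1 :=
  stmt_19_general n d E hirr ω hωabs hωim lam h0 hmax hd2 hmult
end
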